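/- arXiv:1909.02078 — 12 statements merged into one kernel-verified Lean document; each statement's English description precedes it below -/
import Mathlib

section
/- Let 𝒞 be a ℂ-linear subspace of the functions D → ℂ invariant under complex conjugation and let f ∈ 𝒞. Then f is complex conjugate phase retrieval in 𝒞 if and only if there do not exist u, v ∈ 𝒞 such that (i) f = u + v, (ii) Re(u(x)·conj(v(x))) = 0 for all x ∈ D, and (iii) Re(u(x)·conj(v(y)) + u(y)·conj(v(x))) ≠ 0 for some x, y ∈ D. -/
open Complex ComplexConjugate

/-!
Write `f = u + v` and put `g = u - v`. By polarization, `Re (u x * conj (v x)) = 0` for all `x`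
says exactly that `|g| = |f|`, and the vanishing of all the cross terms in (iii) says exactly that
`g` and `f` have the same real Gram kernel `Re (g x * conj (g y)) = Re (f x * conj (f y))`.
Every `g ∈ ℳ_f` arises in this way from `u = (f + g) / 2`, `v = (f - g) / 2`. Hence the theorem
reduces to: two functions with equal moduli and equal real Gram kernels agree up to a unimodular
constant and possibly a conjugation. For this, `g x * conj (g y)` is `f x * conj (f y)` or its
conjugate for every pair; a base point `x₀` with `f x₀ ≠ 0` sorts every `x` into one of the
branches `g x = z₁ * f x` or `g x = z₂ * conj (f x)`, and a pair of points lying strictly in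
different branches is impossible.
-/

namespace Complex

theorem eq_or_eq_conj_of_norm_eq_of_re_eq {w w' : ℂ} (hnorm : ‖w'‖ = ‖w‖) (hre : w'.re = w.re) :
    w' = w ∨ w' = conj w := by
  have hnormSq : normSq w' = normSq w := by rw [← Complex.sq_norm, ← Complex.sq_norm, hnorm]
  rw [normSq_apply, normSq_apply, hre, add_right_inj] at hnormSq
  rcases mul_self_eq_mul_self_iff.mp hnormSq with him | him
  · exact Or.inl (Complex.ext hre him)
  · exact Or.inr (Complex.ext (by simp [hre]) (by simp [him]))

theorem norm_sub_eq_norm_add_iff {a b : ℂ} : ‖a - b‖ = ‖a + b‖ ↔ (a * conj b).re = 0 := by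
  rw [← sq_eq_sq₀ (norm_nonneg _) (norm_nonneg _), Complex.sq_norm, Complex.sq_norm,
    normSq_sub, normSq_add]
  constructor <;> intro h <;> linarith

theorem re_mul_conj_add_sub_re_mul_conj_sub (a b c d : ℂ) :
    ((a + b) * conj (c + d)).re - ((a - b) * conj (c - d)).re
      = 2 * (a * conj d + c * conj b).re := by
  simp only [mul_re, add_re, add_im, sub_re, sub_im, conj_re, conj_im, map_add, map_sub]
  ring

-- With `g x = z₁ * f x`, `g a = z₂ * conj (f a)`, `p = f x`, `q = f a`: the pair condition at `(x, a)`
-- puts `x` or `a` into the other branch as well.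
theorem mul_eq_mul_conj_or_mul_eq_mul_conj {z₁ z₂ p q : ℂ} (hz₂ : ‖z₂‖ = 1)
    (h : z₁ * p * conj (z₂ * conj q) = p * conj q ∨ z₁ * p * conj (z₂ * conj q) = conj p * q) :
    z₁ * p = z₂ * conj p ∨ z₁ * q = z₂ * conj q := by
  have hz₂' : z₂ * conj z₂ = 1 := by rw [mul_conj', hz₂]; norm_num
  simp only [map_mul, conj_conj] at h
  rcases h with h | h
  · rcases eq_or_ne p 0 with rfl | hp
    · simp
    · right
      have h' : z₁ * conj z₂ * q = conj q := mul_left_cancel₀ hp (by linear_combination h)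
      linear_combination z₂ * h' - z₁ * q * hz₂'
  · rcases eq_or_ne q 0 with rfl | hq
    · simp
    · left
      have h' : z₁ * p * conj z₂ = conj p := mul_right_cancel₀ hq (by linear_combination h)
      linear_combination z₂ * h' - z₁ * p * hz₂'

end Complex

section RealGram

variable {D : Type*}

theorem re_mul_conj_eq_iff_re_cross_eq_zero (u v : D → ℂ) :
    (∀ x y, ((u - v) x * conj ((u - v) y)).re = ((u + v) x * conj ((u + v) y)).re) ↔
      ∀ x y, (u x * conj (v y) + u y * conj (v x)).re = 0 := by
  refine forall₂_congr fun x y => ?_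
  have := re_mul_conj_add_sub_re_mul_conj_sub (u x) (v x) (u y) (v y)
  simp only [Pi.add_apply, Pi.sub_apply]
  constructor <;> intro h <;> linarith

theorem re_mul_conj_eq_of_eq_unimodular {f g : D → ℂ}
    (hg : (∃ z : ℂ, ‖z‖ = 1 ∧ g = fun x => z * f x) ∨
      (∃ z : ℂ, ‖z‖ = 1 ∧ g = fun x => z * conj (f x))) (x y : D) :
    (g x * conj (g y)).re = (f x * conj (f y)).re := by
  rcases hg with ⟨z, hz, rfl⟩ | ⟨z, hz, rfl⟩
  · have hz' : z * conj z = 1 := by rw [mul_conj', hz]; norm_num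
    congr 1
    simp only [map_mul]
    linear_combination f x * conj (f y) * hz'
  · have hz' : z * conj z = 1 := by rw [mul_conj', hz]; norm_num
    rw [← conj_re (f x * conj (f y))]
    congr 1
    simp only [map_mul, conj_conj]
    linear_combination conj (f x) * f y * hz'

theorem exists_unimodular_of_norm_eq_of_re_mul_conj_eq {f g : D → ℂ}
    (hnorm : ∀ x, ‖g x‖ = ‖f x‖)
    (hre : ∀ x y, (g x * conj (g y)).re = (f x * conj (f y)).re) :
    (∃ z : ℂ, ‖z‖ = 1 ∧ g = fun x => z * f x) ∨
      (∃ z : ℂ, ‖z‖ = 1 ∧ g = fun x => z * conj (f x)) := by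
  have hpair : ∀ x y, g x * conj (g y) = f x * conj (f y) ∨
      g x * conj (g y) = conj (f x) * f y := fun x y => by
    simpa [mul_comm] using eq_or_eq_conj_of_norm_eq_of_re_eq (by simp [hnorm]) (hre x y)
  by_cases hf : ∀ x, f x = 0
  · refine Or.inl ⟨1, norm_one, funext fun x => ?_⟩
    simpa [hf x] using hnorm x
  push Not at hf
  obtain ⟨x₀, hfx₀⟩ := hf
  have hgx₀ : conj (g x₀) ≠ 0 := by simpa [← norm_eq_zero, hnorm x₀] using hfx₀
  set z₁ := conj (f x₀) / conj (g x₀)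
  set z₂ := f x₀ / conj (g x₀)
  have hz₁ : ‖z₁‖ = 1 := by simp [z₁, hnorm x₀, hfx₀]
  have hz₂ : ‖z₂‖ = 1 := by simp [z₂, hnorm x₀, hfx₀]
  have hbranch : ∀ x, g x = z₁ * f x ∨ g x = z₂ * conj (f x) := fun x => by
    rcases hpair x x₀ with h | h
    · exact Or.inl (by rw [div_mul_eq_mul_div, eq_div_iff hgx₀, h, mul_comm])
    · exact Or.inr (by rw [div_mul_eq_mul_div, eq_div_iff hgx₀, h, mul_comm])
  by_cases hall : ∀ x, g x = z₁ * f x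
  · exact Or.inl ⟨z₁, hz₁, funext hall⟩
  push Not at hall
  obtain ⟨a, ha⟩ := hall
  have hga : g a = z₂ * conj (f a) := (hbranch a).resolve_left ha
  refine Or.inr ⟨z₂, hz₂, funext fun x => (hbranch x).elim (fun hx => ?_) id⟩
  have hmeet := mul_eq_mul_conj_or_mul_eq_mul_conj hz₂ (hx ▸ hga ▸ hpair x a)
  exact hx.trans (hmeet.resolve_right fun h => ha (hga.trans h.symm))

end RealGram

theorem stmt_0_general {D : Type*} (C : Submodule ℂ (D → ℂ))
    (hconj : ∀ f ∈ C, (fun x => (starRingEnd ℂ) (f x)) ∈ C)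
    (f : D → ℂ) (hf : f ∈ C) :
    ({g : D → ℂ | g ∈ C ∧ ∀ x, ‖g x‖ = ‖f x‖} =
        {g : D → ℂ | ∃ z : ℂ, ‖z‖ = 1 ∧ g = fun x => z * f x} ∪
        {g : D → ℂ | ∃ z : ℂ, ‖z‖ = 1 ∧ g = fun x => z * (starRingEnd ℂ) (f x)}) ↔
      ¬ ∃ u ∈ C, ∃ v ∈ C, f = u + v ∧
          (∀ x, (u x * (starRingEnd ℂ) (v x)).re = 0) ∧
          (∃ x y, (u x * (starRingEnd ℂ) (v y) + u y * (starRingEnd ℂ) (v x)).re ≠ 0) := by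
  constructor
  · rintro hM ⟨u, hu, v, hv, rfl, hperp, x, y, hxy⟩
    have hg : u - v ∈ {g : D → ℂ | g ∈ C ∧ ∀ x, ‖g x‖ = ‖(u + v) x‖} :=
      ⟨C.sub_mem hu hv, fun x => norm_sub_eq_norm_add_iff.mpr (hperp x)⟩
    rw [hM] at hg
    exact hxy ((re_mul_conj_eq_iff_re_cross_eq_zero u v).mp
      (re_mul_conj_eq_of_eq_unimodular hg) x y)
  · intro hne
    ext g
    refine ⟨fun ⟨hgC, hnorm⟩ => ?_, fun hg => ⟨?_, fun x => ?_⟩⟩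
    · obtain ⟨u, hu, v, hv, rfl, rfl⟩ : ∃ u ∈ C, ∃ v ∈ C, f = u + v ∧ g = u - v :=
        ⟨(2⁻¹ : ℂ) • (f + g), C.smul_mem _ (C.add_mem hf hgC),
          (2⁻¹ : ℂ) • (f - g), C.smul_mem _ (C.sub_mem hf hgC), by module, by module⟩
      have hperp : ∀ x, (u x * conj (v x)).re = 0 :=
        fun x => norm_sub_eq_norm_add_iff.mp (hnorm x)
      have hcross : ∀ x y, (u x * conj (v y) + u y * conj (v x)).re = 0 := by
        by_contra h
        push Not at h
        exact hne ⟨u, hu, v, hv, rfl, hperp, h⟩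
      exact exists_unimodular_of_norm_eq_of_re_mul_conj_eq hnorm
        ((re_mul_conj_eq_iff_re_cross_eq_zero u v).mpr hcross)
    · rcases hg with ⟨z, -, rfl⟩ | ⟨z, -, rfl⟩
      · exact C.smul_mem z hf
      · exact C.smul_mem z (hconj f hf)
    · rcases hg with ⟨z, hz, rfl⟩ | ⟨z, hz, rfl⟩ <;> simp [hz]

/-- **Theorem 2.1 (complex conjugate phase retrieval of a function).**
Let `C` be a ℂ-linear subspace of functions `D → ℂ` invariant under complex conjugation
and `f ∈ C`.  Then `f` is complex conjugate phase retrieval in `C` if and only if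
there do not exist `u, v ∈ C` with `f = u + v`, `Re (u x * conj (v x)) = 0` for all `x`,
and `Re (u x * conj (v y) + u y * conj (v x)) ≠ 0` for some `x, y`. -/
theorem stmt_0 {D : Type*} [Nonempty D] (C : Submodule ℂ (D → ℂ))
    (hconj : ∀ f ∈ C, (fun x => (starRingEnd ℂ) (f x)) ∈ C)
    (f : D → ℂ) (hf : f ∈ C) :
    ({g : D → ℂ | g ∈ C ∧ ∀ x, ‖g x‖ = ‖f x‖} =
        {g : D → ℂ | ∃ z : ℂ, ‖z‖ = 1 ∧ g = fun x => z * f x} ∪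
        {g : D → ℂ | ∃ z : ℂ, ‖z‖ = 1 ∧ g = fun x => z * (starRingEnd ℂ) (f x)}) ↔
      ¬ ∃ u ∈ C, ∃ v ∈ C, f = u + v ∧
          (∀ x, (u x * (starRingEnd ℂ) (v x)).re = 0) ∧
          (∃ x y, (u x * (starRingEnd ℂ) (v y) + u y * (starRingEnd ℂ) (v x)).re ≠ 0) :=
  stmt_0_general C hconj f hf
end

section
/- Let A be a real m×n matrix of rank n with rows a₁ᵀ, …, a_mᵀ, and let f = A·x_f ∈ R_ℂ(A) with x_f ∈ ℂⁿ. Then f is complex conjugate phase retrieval in R_ℂ(A) if and only if there do not exist x₁, x₂ ∈ ℂⁿ such that x_f = x₁ + x₂ and the real n×n matrix X = Re(x₂)·(Re x₁)ᵀ + Im(x₂)·(Im x₁)ᵀ satisfies Xᵀ ≠ −X and Tr(a_i a_iᵀ X) = a_iᵀ X a_i = 0 for all 1 ≤ i ≤ m. -/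
/-!
View `ℂ` as a real inner product space, so that `⟪w, z⟫_ℝ = Re (z * conj w)`. The real Gram
matrix `gram ℝ x` of `x : ι → ℂ` determines `x` up to a unimodular factor and conjugation:
after multiplying `x` by the conjugate of a nonzero entry `x j₀`, the real parts of all entries
are read off row `j₀` of the Gram matrix, and the imaginary parts `s` are then determined by
`s j * s k`, hence up to a global sign.

For `x_f = x₁ + x₂` and `y = x₁ - x₂`, the measurements `|aᵢᵀ x_f|` and `|aᵢᵀ y|` agree iff
`(A x₁)ᵢ ⟂ (A x₂)ᵢ` in `ℝ²`, i.e. `aᵢᵀ X aᵢ = 0`; and the real Gram matrices of `x_f` and `y`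
differ by `2 (X + Xᵀ)`. Every `y` arises this way, so the nontrivial solutions `y` are exactly
those coming from a non-skew `X`; injectivity of `A` moves the conclusion between coefficient
vectors and their images.
-/

open Complex Matrix
open scoped InnerProductSpace ComplexConjugate

theorem eq_or_eq_neg_of_forall_mul_eq_mul {ι : Type*} {s t : ι → ℝ}
    (h : ∀ j k, t j * t k = s j * s k) : t = s ∨ t = -s := by
  by_cases hs : s = 0
  · refine Or.inl (funext fun j => ?_)
    simpa [hs] using h j j
  obtain ⟨k, hk⟩ := Function.ne_iff.mp hs
  rcases mul_self_eq_mul_self_iff.mp (h k k) with htk | htk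
  · exact Or.inl <| funext fun j => mul_right_cancel₀ hk (by simpa [htk] using h j k)
  · refine Or.inr <| funext fun j => mul_right_cancel₀ hk ?_
    have := h j k
    rw [htk] at this
    simp only [Pi.neg_apply]
    linear_combination -this

theorem Complex.real_inner_eq_re_mul_re_add_im_mul_im (w z : ℂ) :
    ⟪w, z⟫_ℝ = w.re * z.re + w.im * z.im := by
  rw [Complex.inner]
  simp only [mul_re, conj_re, conj_im]
  ring

section Gram

variable {ι : Type*}

theorem gram_real_smul (w : ℂ) (x : ι → ℂ) :
    gram ℝ (w • x) = (‖w‖ ^ 2) • gram ℝ x := by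
  ext j k
  simp only [gram_apply, Pi.smul_apply, Matrix.smul_apply, smul_eq_mul, ← normSq_eq_norm_sq,
    normSq_apply, real_inner_eq_re_mul_re_add_im_mul_im, mul_re, mul_im]
  ring

theorem gram_real_smul_of_norm_eq_one {z : ℂ} (hz : ‖z‖ = 1) (x : ι → ℂ) :
    gram ℝ (z • x) = gram ℝ x := by
  simpa [hz] using gram_real_smul z x

theorem gram_real_star (x : ι → ℂ) : gram ℝ (star x) = gram ℝ x := by
  ext j k
  simp only [gram_apply, Pi.star_apply, real_inner_eq_re_mul_re_add_im_mul_im, star_def,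
    conj_re, conj_im]
  ring

theorem eq_or_eq_star_of_gram_real_eq_of_re_eq {c c' : ι → ℂ} (hgram : gram ℝ c' = gram ℝ c)
    (hre : ∀ k, (c' k).re = (c k).re) : c' = c ∨ c' = star c := by
  have him : ∀ j k, (c' j).im * (c' k).im = (c j).im * (c k).im := fun j k => by
    have := congrFun (congrFun hgram j) k
    simp only [gram_apply, real_inner_eq_re_mul_re_add_im_mul_im, hre] at this
    linarith
  refine (eq_or_eq_neg_of_forall_mul_eq_mul him).imp (fun h => ?_) (fun h => ?_) <;>
    funext k <;> apply Complex.ext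
  all_goals simp [hre, congrFun h k]

theorem exists_eq_smul_or_eq_smul_star_of_gram_real_eq {x x' : ι → ℂ}
    (h : gram ℝ x' = gram ℝ x) : ∃ z : ℂ, ‖z‖ = 1 ∧ (x' = z • x ∨ x' = z • star x) := by
  have hnorm : ∀ j, ‖x' j‖ = ‖x j‖ := fun j => by
    simpa [real_inner_self_eq_norm_sq] using congrFun (congrFun h j) j
  by_cases hx : x = 0
  · refine ⟨1, norm_one, Or.inl (funext fun j => ?_)⟩
    simpa [hx] using hnorm j
  obtain ⟨j₀, hj₀⟩ := Function.ne_iff.mp hx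
  set p := x j₀
  set p' := x' j₀
  have hp : p ≠ 0 := hj₀
  have hp' : p' ≠ 0 := norm_ne_zero_iff.mp (by rw [hnorm]; exact norm_ne_zero_iff.mpr hp)
  -- after scaling by `conj p` and `conj p'` both `j₀`-th entries equal `‖p‖ ^ 2`
  have hgram : gram ℝ (conj p' • x') = gram ℝ (conj p • x) := by
    rw [gram_real_smul, gram_real_smul, h, norm_conj, norm_conj, hnorm]
  have hre : ∀ k, (conj p' * x' k).re = (conj p * x k).re := fun k => by
    simpa [Complex.inner, mul_comm] using congrFun (congrFun h j₀) k
  have hp'c : conj p' ≠ 0 := (map_ne_zero _).mpr hp'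
  have hunit : ‖p‖ / ‖p'‖ = 1 := by rw [hnorm, div_self (norm_ne_zero_iff.mpr hp)]
  rcases eq_or_eq_star_of_gram_real_eq_of_re_eq hgram hre with hc | hc
  · refine ⟨conj p / conj p', by simpa using hunit, Or.inl (funext fun k => ?_)⟩
    have := congrFun hc k
    simp only [Pi.smul_apply, smul_eq_mul] at this ⊢
    rw [div_mul_eq_mul_div, eq_div_iff hp'c]
    linear_combination this
  · refine ⟨p / conj p', by simpa using hunit, Or.inr (funext fun k => ?_)⟩
    have := congrFun hc k
    simp only [Pi.smul_apply, smul_eq_mul, Pi.star_apply, star_def, map_mul, conj_conj] at this ⊢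
    rw [div_mul_eq_mul_div, eq_div_iff hp'c]
    linear_combination this

theorem gram_real_eq_iff {x x' : ι → ℂ} :
    gram ℝ x' = gram ℝ x ↔ ∃ z : ℂ, ‖z‖ = 1 ∧ (x' = z • x ∨ x' = z • star x) := by
  refine ⟨exists_eq_smul_or_eq_smul_star_of_gram_real_eq, ?_⟩
  rintro ⟨z, hz, rfl | rfl⟩
  · exact gram_real_smul_of_norm_eq_one hz x
  · rw [gram_real_smul_of_norm_eq_one hz, gram_real_star]

theorem gram_real_sub_eq_gram_real_add_iff (x₁ x₂ : ι → ℂ) :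
    gram ℝ (x₁ - x₂) = gram ℝ (x₁ + x₂) ↔
      (of fun j k => ⟪x₂ j, x₁ k⟫_ℝ)ᵀ = -of fun j k => ⟪x₂ j, x₁ k⟫_ℝ := by
  simp only [← Matrix.ext_iff, gram_apply, transpose_apply, Matrix.neg_apply, of_apply,
    Pi.add_apply, Pi.sub_apply, inner_add_left, inner_add_right, inner_sub_left, inner_sub_right]
  refine forall₂_congr fun j k => ?_
  rw [real_inner_comm (x₁ j) (x₂ k)]
  constructor <;> intro h <;> linarith

end Gram

section RangeSpace

variable {m n : Type*} [Fintype n]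

theorem dotProduct_of_real_inner_mulVec (a : n → ℝ) (x y : n → ℂ) :
    a ⬝ᵥ (of fun j k => ⟪x j, y k⟫_ℝ) *ᵥ a = ⟪∑ j, a j • x j, ∑ k, a k • y k⟫_ℝ := by
  simp_rw [dotProduct, mulVec, of_apply, dotProduct, sum_inner, inner_sum, real_inner_smul_left,
    real_inner_smul_right, Finset.mul_sum]
  exact Finset.sum_congr rfl fun j _ => Finset.sum_congr rfl fun k _ => by ring

theorem map_ofReal_mulVec_apply (A : Matrix m n ℝ) (x : n → ℂ) (i : m) :
    (A.map ofReal *ᵥ x) i = ∑ j, A i j • x j := by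
  simp [mulVec, dotProduct, Complex.real_smul]

theorem norm_map_ofReal_mulVec_add_eq_norm_sub_iff (A : Matrix m n ℝ) (x₁ x₂ : n → ℂ) (i : m) :
    ‖(A.map ofReal *ᵥ (x₁ + x₂)) i‖ = ‖(A.map ofReal *ᵥ (x₁ - x₂)) i‖ ↔
      A i ⬝ᵥ (of fun j k => ⟪x₂ j, x₁ k⟫_ℝ) *ᵥ A i = 0 := by
  rw [mulVec_add, mulVec_sub, Pi.add_apply, Pi.sub_apply,
    InnerProductGeometry.norm_add_eq_norm_sub_iff_angle_eq_pi_div_two,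
    ← InnerProductGeometry.inner_eq_zero_iff_angle_eq_pi_div_two, real_inner_comm,
    dotProduct_of_real_inner_mulVec, map_ofReal_mulVec_apply, map_ofReal_mulVec_apply]

theorem re_map_ofReal_mulVec_apply (A : Matrix m n ℝ) (x : n → ℂ) (i : m) :
    ((A.map ofReal *ᵥ x) i).re = (A *ᵥ fun j => (x j).re) i := by
  simp [mulVec, dotProduct, Complex.re_sum]

theorem im_map_ofReal_mulVec_apply (A : Matrix m n ℝ) (x : n → ℂ) (i : m) :
    ((A.map ofReal *ᵥ x) i).im = (A *ᵥ fun j => (x j).im) i := by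
  simp [mulVec, dotProduct, Complex.im_sum]

theorem mulVec_injective_of_rank_eq_card {K : Type*} [Field K] (A : Matrix m n K)
    (hA : A.rank = Fintype.card n) : Function.Injective A.mulVec := by
  have hker := A.mulVecLin.finrank_range_add_finrank_ker
  rw [← rank, hA, Module.finrank_fintype_fun_eq_card, add_eq_left,
    Submodule.finrank_eq_zero] at hker
  exact LinearMap.ker_eq_bot.mp hker

theorem map_ofReal_mulVec_injective {A : Matrix m n ℝ} (hA : Function.Injective A.mulVec) :
    Function.Injective (A.map ofReal).mulVec := by
  intro y y' h
  have hre : (A *ᵥ fun j => (y j).re) = A *ᵥ fun j => (y' j).re := funext fun i => by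
    rw [← re_map_ofReal_mulVec_apply, ← re_map_ofReal_mulVec_apply, h]
  have him : (A *ᵥ fun j => (y j).im) = A *ᵥ fun j => (y' j).im := funext fun i => by
    rw [← im_map_ofReal_mulVec_apply, ← im_map_ofReal_mulVec_apply, h]
  exact funext fun j => Complex.ext (congrFun (hA hre) j) (congrFun (hA him) j)

end RangeSpace

/-- **Corollary 2.3 (complex conjugate phase retrieval in a complex range space).**
Let `A` be a real `m × n` matrix of rank `n` with rows `aᵢ`, and `f = A xf ∈ R_ℂ(A)`.
Then `f` is complex conjugate phase retrieval in `R_ℂ(A)` iff there do not exist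
`x₁, x₂ ∈ ℂⁿ` with `xf = x₁ + x₂` such that the real matrix
`X = Re x₂ (Re x₁)ᵀ + Im x₂ (Im x₁)ᵀ` satisfies `Xᵀ ≠ -X` and `aᵢᵀ X aᵢ = 0` for all `i`. -/
theorem stmt_2 {m n : ℕ} (A : Matrix (Fin m) (Fin n) ℝ) (hA : A.rank = n)
    (xf : Fin n → ℂ) :
    (∀ y : Fin n → ℂ,
        (∀ i, ‖(A.map (Complex.ofReal)).mulVec y i‖ =
          ‖(A.map (Complex.ofReal)).mulVec xf i‖) →
        ∃ z : ℂ, ‖z‖ = 1 ∧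
          ((A.map (Complex.ofReal)).mulVec y = z • (A.map (Complex.ofReal)).mulVec xf ∨
            (A.map (Complex.ofReal)).mulVec y = z • (A.map (Complex.ofReal)).mulVec (star xf))) ↔
      ¬ ∃ (x₁ x₂ : Fin n → ℂ) (X : Matrix (Fin n) (Fin n) ℝ),
          xf = x₁ + x₂ ∧
          X = Matrix.of (fun j k => (x₂ j).re * (x₁ k).re + (x₂ j).im * (x₁ k).im) ∧
          Xᵀ ≠ -X ∧
          (∀ i, A i ⬝ᵥ X.mulVec (A i) = 0) := by
  simp only [← real_inner_eq_re_mul_re_add_im_mul_im]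
  have hinj := map_ofReal_mulVec_injective
    (mulVec_injective_of_rank_eq_card A (by rw [hA, Fintype.card_fin]))
  constructor
  · rintro hccpr ⟨x₁, x₂, X, rfl, rfl, hskew, hzero⟩
    apply hskew
    obtain ⟨z, hz, hy⟩ := hccpr (x₁ - x₂) fun i =>
      ((norm_map_ofReal_mulVec_add_eq_norm_sub_iff A x₁ x₂ i).2 (hzero i)).symm
    rw [← gram_real_sub_eq_gram_real_add_iff, gram_real_eq_iff]
    refine ⟨z, hz, hy.imp (fun h => hinj ?_) (fun h => hinj ?_)⟩ <;> rwa [mulVec_smul]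
  · intro hno y hy
    obtain ⟨x₁, x₂, rfl, rfl⟩ : ∃ x₁ x₂ : Fin n → ℂ, xf = x₁ + x₂ ∧ y = x₁ - x₂ :=
      ⟨(2⁻¹ : ℂ) • (xf + y), (2⁻¹ : ℂ) • (xf - y), by module, by module⟩
    have hzero : ∀ i, A i ⬝ᵥ (of fun j k => ⟪x₂ j, x₁ k⟫_ℝ) *ᵥ A i = 0 := fun i =>
      (norm_map_ofReal_mulVec_add_eq_norm_sub_iff A x₁ x₂ i).1 (hy i).symm
    have hskew : (of fun j k => ⟪x₂ j, x₁ k⟫_ℝ)ᵀ = -of fun j k => ⟪x₂ j, x₁ k⟫_ℝ :=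
      not_not.1 fun h => hno ⟨x₁, x₂, _, rfl, rfl, h, hzero⟩
    obtain ⟨z, hz, h⟩ := gram_real_eq_iff.1 ((gram_real_sub_eq_gram_real_add_iff x₁ x₂).2 hskew)
    exact ⟨z, hz, h.imp (fun h => by rw [h, mulVec_smul]) (fun h => by rw [h, mulVec_smul])⟩
end

section
/- Let 𝒞 be a ℂ-linear subspace of the functions D → ℂ invariant under complex conjugation. If f ∈ 𝒞 is complex conjugate phase retrieval in 𝒞, then for all real numbers a and b, the real-valued function g = a·Re(f) + b·Im(f) ∈ Re(𝒞) is phase retrieval in Re(𝒞), i.e. every h ∈ Re(𝒞) with |h(x)| = |g(x)| for all x ∈ D satisfies h = g or h = −g. -/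
open Complex ComplexConjugate

/-!
Put `F = (a - b i) f`, so that `g = Re F`. A real `h ∈ Re(C)` with `|h| = |g|` lifts to
`u = h + i Im F ∈ C`, which pointwise equals `F` or `-conj F`; in particular `|u| = |a - b i| |f|`.
Conjugate phase retrieval of `f` then makes `u` a single constant multiple of `F` or of `conj F`,
and such a multiple cannot switch between the two pointwise alternatives except where `F`
vanishes. Hence `u = F` or `u = -conj F` globally, i.e. `h = g` or `h = -g`.
-/

section ConjInvariant

variable {D : Type*} {C : Submodule ℂ (D → ℂ)}

theorem ofReal_re_comp_mem (hconj : ∀ f ∈ C, (fun x => conj (f x)) ∈ C) {F : D → ℂ}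
    (hF : F ∈ C) : (fun x => ((F x).re : ℂ)) ∈ C := by
  have hre : (fun x => ((F x).re : ℂ)) = (2 : ℂ)⁻¹ • (F + fun x => conj (F x)) := by
    funext x
    simp only [re_eq_add_conj, Pi.smul_apply, Pi.add_apply, smul_eq_mul]
    ring
  rw [hre]
  exact C.smul_mem _ (C.add_mem hF (hconj F hF))

theorem ofReal_im_comp_mem (hconj : ∀ f ∈ C, (fun x => conj (f x)) ∈ C) {F : D → ℂ}
    (hF : F ∈ C) : (fun x => ((F x).im : ℂ)) ∈ C := by
  have him : (fun x => ((F x).im : ℂ)) = (2 * I)⁻¹ • (F - fun x => conj (F x)) := by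
    funext x
    simp only [im_eq_sub_conj, Pi.smul_apply, Pi.sub_apply, smul_eq_mul]
    ring
  rw [him]
  exact C.smul_mem _ (C.sub_mem hF (hconj F hF))

theorem exists_eq_mul_or_eq_mul_conj {f : D → ℂ}
    (hpr : {g : D → ℂ | g ∈ C ∧ ∀ x, ‖g x‖ = ‖f x‖} =
        {g : D → ℂ | ∃ z : ℂ, ‖z‖ = 1 ∧ g = fun x => z * f x} ∪
        {g : D → ℂ | ∃ z : ℂ, ‖z‖ = 1 ∧ g = fun x => z * conj (f x)})
    (c : ℂ) {u : D → ℂ} (hu : u ∈ C) (hnorm : ∀ x, ‖u x‖ = ‖c * f x‖) :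
    ∃ ζ : ℂ, (∀ x, u x = ζ * (c * f x)) ∨ (∀ x, u x = ζ * conj (c * f x)) := by
  rcases eq_or_ne c 0 with rfl | hc
  · exact ⟨0, Or.inl fun x => by simpa using hnorm x⟩
  have hmem : c⁻¹ • u ∈ {g : D → ℂ | g ∈ C ∧ ∀ x, ‖g x‖ = ‖f x‖} := by
    refine ⟨C.smul_mem _ hu, fun x => ?_⟩
    rw [Pi.smul_apply, smul_eq_mul, norm_mul, hnorm x, norm_mul, norm_inv,
      inv_mul_cancel_left₀ (norm_ne_zero_iff.mpr hc)]
  rw [hpr] at hmem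
  rcases hmem with ⟨z, -, hz⟩ | ⟨z, -, hz⟩
  · refine ⟨z, Or.inl fun x => ?_⟩
    have := congrFun hz x
    simp only [Pi.smul_apply, smul_eq_mul] at this
    rw [← mul_inv_cancel_left₀ hc (u x), this]
    ring
  · have hc' : conj c ≠ 0 := (map_ne_zero _).mpr hc
    refine ⟨c * z / conj c, Or.inr fun x => ?_⟩
    have := congrFun hz x
    simp only [Pi.smul_apply, smul_eq_mul] at this
    rw [← mul_inv_cancel_left₀ hc (u x), this, map_mul]
    field_simp

end ConjInvariant

theorem eq_or_eq_neg_conj_of_abs_eq {h : ℝ} {w : ℂ} (habs : |h| = |w.re|) :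
    (h : ℂ) + w.im * I = w ∨ (h : ℂ) + w.im * I = -conj w := by
  rcases abs_eq_abs.mp habs with rfl | rfl
  · exact Or.inl (re_add_im w)
  · right
    apply Complex.ext <;> simp

theorem forall_eq_or_forall_eq_of_eq_mul {D : Type*} {p q u : D → ℂ} {ζ : ℂ}
    (hpq : ∀ x, p x = 0 → q x = 0) (hu : ∀ x, u x = p x ∨ u x = q x)
    (hζ : ∀ x, u x = ζ * p x) : (∀ x, u x = p x) ∨ (∀ x, u x = q x) := by
  rcases eq_or_ne ζ 1 with rfl | hζ1
  · exact Or.inl fun x => by simpa using hζ x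
  refine Or.inr fun x => (hu x).elim (fun hup => ?_) id
  have hp : p x = 0 := by
    have : (ζ - 1) * p x = 0 := by linear_combination hup - hζ x
    exact (mul_eq_zero.mp this).resolve_left (sub_ne_zero.mpr hζ1)
  rw [hup, hp, hpq x hp]

theorem stmt_4_general {D : Type*} (C : Submodule ℂ (D → ℂ))
    (hconj : ∀ f ∈ C, (fun x => (starRingEnd ℂ) (f x)) ∈ C)
    (f : D → ℂ) (hf : f ∈ C)
    (hpr : {g : D → ℂ | g ∈ C ∧ ∀ x, ‖g x‖ = ‖f x‖} =
        {g : D → ℂ | ∃ z : ℂ, ‖z‖ = 1 ∧ g = fun x => z * f x} ∪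
        {g : D → ℂ | ∃ z : ℂ, ‖z‖ = 1 ∧ g = fun x => z * (starRingEnd ℂ) (f x)})
    (a b : ℝ) :
    (fun x => a * (f x).re + b * (f x).im) ∈
        {g : D → ℝ | ∃ w ∈ C, ∀ x, (g x : ℂ) = (w x + (starRingEnd ℂ) (w x)) / 2} ∧
      ∀ h ∈ {g : D → ℝ | ∃ w ∈ C, ∀ x, (g x : ℂ) = (w x + (starRingEnd ℂ) (w x)) / 2},
        (∀ x, |h x| = |a * (f x).re + b * (f x).im|) →
        h = (fun x => a * (f x).re + b * (f x).im) ∨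
          h = (fun x => -(a * (f x).re + b * (f x).im)) := by
  set F : D → ℂ := fun x => (a - b * I) * f x
  have hFmem : F ∈ C := C.smul_mem _ hf
  have hFre : ∀ x, (F x).re = a * (f x).re + b * (f x).im := fun x => by simp [F]
  refine ⟨⟨F, hFmem, fun x => by rw [← re_eq_add_conj, hFre]⟩, ?_⟩
  rintro h ⟨v, hv, hhv⟩ habs
  have hh : (fun x => (h x : ℂ)) ∈ C := by
    convert ofReal_re_comp_mem hconj hv using 2 with x
    rw [hhv x, re_eq_add_conj]
  set u : D → ℂ := fun x => (h x : ℂ) + (F x).im * I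
  have hu : u ∈ C := by
    convert C.add_mem hh (C.smul_mem I (ofReal_im_comp_mem hconj hFmem)) using 1
    funext x
    simp [u, mul_comm]
  have hcases : ∀ x, u x = F x ∨ u x = -conj (F x) := fun x =>
    eq_or_eq_neg_conj_of_abs_eq (by rw [hFre]; exact habs x)
  have hnorm : ∀ x, ‖u x‖ = ‖(a - b * I) * f x‖ := fun x => by
    rcases hcases x with hx | hx <;> simp only [hx, norm_neg, norm_conj, F]
  have hglobal : (∀ x, u x = F x) ∨ (∀ x, u x = -conj (F x)) := by
    obtain ⟨ζ, hζ | hζ⟩ := exists_eq_mul_or_eq_mul_conj hpr _ hu hnorm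
    · exact forall_eq_or_forall_eq_of_eq_mul (by simp) hcases hζ
    · exact (forall_eq_or_forall_eq_of_eq_mul (ζ := -ζ) (by simp) (fun x => (hcases x).symm)
        fun x => by rw [hζ x]; ring).symm
  refine hglobal.imp (fun heq => ?_) (fun heq => ?_) <;> funext x <;>
    simpa [u, hFre] using congrArg re (heq x)

/-- **Theorem 2.5 (real parts of a conjugate phase retrieval function).**
Let `C` be a ℂ-linear subspace of functions `D → ℂ` invariant under complex conjugation.
If `f ∈ C` is complex conjugate phase retrieval in `C`, then for all `a b : ℝ` the
real-valued function `g = a • Re f + b • Im f` belongs to `Re(C)` and is phase retrieval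
in `Re(C) = {(w + conj w)/2 : w ∈ C}`. -/
theorem stmt_4 {D : Type*} [Nonempty D] (C : Submodule ℂ (D → ℂ))
    (hconj : ∀ f ∈ C, (fun x => (starRingEnd ℂ) (f x)) ∈ C)
    (f : D → ℂ) (hf : f ∈ C)
    (hpr : {g : D → ℂ | g ∈ C ∧ ∀ x, ‖g x‖ = ‖f x‖} =
        {g : D → ℂ | ∃ z : ℂ, ‖z‖ = 1 ∧ g = fun x => z * f x} ∪
        {g : D → ℂ | ∃ z : ℂ, ‖z‖ = 1 ∧ g = fun x => z * (starRingEnd ℂ) (f x)})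
    (a b : ℝ) :
    (fun x => a * (f x).re + b * (f x).im) ∈
        {g : D → ℝ | ∃ w ∈ C, ∀ x, (g x : ℂ) = (w x + (starRingEnd ℂ) (w x)) / 2} ∧
      ∀ h ∈ {g : D → ℝ | ∃ w ∈ C, ∀ x, (g x : ℂ) = (w x + (starRingEnd ℂ) (w x)) / 2},
        (∀ x, |h x| = |a * (f x).re + b * (f x).im|) →
        h = (fun x => a * (f x).re + b * (f x).im) ∨
          h = (fun x => -(a * (f x).re + b * (f x).im)) :=
  stmt_4_general C hconj f hf hpr a b
end

section
/- Let 𝒞 be a ℂ-linear subspace of the functions D → ℂ invariant under complex conjugation. If 𝒞 is complex conjugate phase retrieval, then Re(𝒞) is phase retrieval, i.e. for all g, h ∈ Re(𝒞), if |h(x)| = |g(x)| for all x ∈ D then h = g or h = −g. -/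
open Complex

/-! A real function in `C` is its own conjugate, so phase retrieval of it in `C` leaves only
the ambiguity `h = z • g` with `|z| = 1`; comparing at a point where `g ≠ 0` shows that
`z` is real, hence `z = ±1`. -/

theorem ofReal_comp_mem_of_eq_re {D : Type*} (C : Submodule ℂ (D → ℂ))
    (hconj : ∀ f ∈ C, (fun x => (starRingEnd ℂ) (f x)) ∈ C) {w : D → ℂ} (hw : w ∈ C)
    {g : D → ℝ} (hg : ∀ x, (g x : ℂ) = (w x + (starRingEnd ℂ) (w x)) / 2) :
    (fun x => (g x : ℂ)) ∈ C := by
  have hg_eq : (fun x => (g x : ℂ)) = (1 / 2 : ℂ) • (w + fun x => (starRingEnd ℂ) (w x)) := by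
    funext x
    simp only [Pi.smul_apply, Pi.add_apply, smul_eq_mul, hg x]
    ring
  rw [hg_eq]
  exact C.smul_mem _ (C.add_mem hw (hconj w hw))

theorem eq_or_eq_neg_of_ofReal_eq_mul {D : Type*} {g h : D → ℝ} {z : ℂ} (hz : ‖z‖ = 1)
    (hzg : ∀ x, (h x : ℂ) = z * g x) : h = g ∨ h = -g := by
  by_cases hg : g = 0
  · left
    funext x
    have : (h x : ℂ) = 0 := by simpa [hg] using hzg x
    simpa [hg] using this
  obtain ⟨x₀, hx₀⟩ := Function.ne_iff.mp hg
  set r := h x₀ / g x₀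
  have hzr : z = r := by
    have hgx₀ : (g x₀ : ℂ) ≠ 0 := by exact_mod_cast hx₀
    push_cast [r]
    rw [eq_div_iff hgx₀, hzg x₀]
  have hh : ∀ x, h x = r * g x := fun x => by exact_mod_cast hzr ▸ hzg x
  have hr : |r| = 1 := by simpa [hzr] using hz
  rcases abs_eq zero_le_one |>.mp hr with hr | hr
  · left; funext x; rw [hh x, hr, one_mul]
  · right; funext x; rw [hh x, hr]; simp

theorem stmt_5_general {D : Type*} (C : Submodule ℂ (D → ℂ))
    (hconj : ∀ f ∈ C, (fun x => (starRingEnd ℂ) (f x)) ∈ C)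
    (hpr : ∀ f ∈ C,
      {g : D → ℂ | g ∈ C ∧ ∀ x, ‖g x‖ = ‖f x‖} =
        {g : D → ℂ | ∃ z : ℂ, ‖z‖ = 1 ∧ g = fun x => z * f x} ∪
        {g : D → ℂ | ∃ z : ℂ, ‖z‖ = 1 ∧ g = fun x => z * (starRingEnd ℂ) (f x)}) :
    ∀ g ∈ {g : D → ℝ | ∃ w ∈ C, ∀ x, (g x : ℂ) = (w x + (starRingEnd ℂ) (w x)) / 2},
      ∀ h ∈ {g : D → ℝ | ∃ w ∈ C, ∀ x, (g x : ℂ) = (w x + (starRingEnd ℂ) (w x)) / 2},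
        (∀ x, |h x| = |g x|) → h = g ∨ h = -g := by
  rintro g ⟨wg, hwg, hg⟩ h ⟨wh, hwh, hh⟩ habs
  have hgC := ofReal_comp_mem_of_eq_re C hconj hwg hg
  have hmem : (fun x => (h x : ℂ)) ∈ {g' : D → ℂ | g' ∈ C ∧ ∀ x, ‖g' x‖ = ‖(g x : ℂ)‖} :=
    ⟨ofReal_comp_mem_of_eq_re C hconj hwh hh, fun x => by simp [habs x]⟩
  rw [hpr _ hgC] at hmem
  obtain ⟨z, hz, hzg⟩ : ∃ z : ℂ, ‖z‖ = 1 ∧ ∀ x, (h x : ℂ) = z * g x := by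
    rcases hmem with ⟨z, hz, he⟩ | ⟨z, hz, he⟩
    · exact ⟨z, hz, congrFun he⟩
    · exact ⟨z, hz, fun x => by simpa using congrFun he x⟩
  exact eq_or_eq_neg_of_ofReal_eq_mul hz hzg

/-- **Corollary 2.6.**  Let `C` be a ℂ-linear subspace of functions `D → ℂ` invariant
under complex conjugation.  If `C` is complex conjugate phase retrieval, then the real
linear space `Re(C) = {(w + conj w)/2 : w ∈ C}` of real-valued functions in `C` is
phase retrieval. -/
theorem stmt_5 {D : Type*} [Nonempty D] (C : Submodule ℂ (D → ℂ))
    (hconj : ∀ f ∈ C, (fun x => (starRingEnd ℂ) (f x)) ∈ C)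
    (hpr : ∀ f ∈ C,
      {g : D → ℂ | g ∈ C ∧ ∀ x, ‖g x‖ = ‖f x‖} =
        {g : D → ℂ | ∃ z : ℂ, ‖z‖ = 1 ∧ g = fun x => z * f x} ∪
        {g : D → ℂ | ∃ z : ℂ, ‖z‖ = 1 ∧ g = fun x => z * (starRingEnd ℂ) (f x)}) :
    ∀ g ∈ {g : D → ℝ | ∃ w ∈ C, ∀ x, (g x : ℂ) = (w x + (starRingEnd ℂ) (w x)) / 2},
      ∀ h ∈ {g : D → ℝ | ∃ w ∈ C, ∀ x, (g x : ℂ) = (w x + (starRingEnd ℂ) (w x)) / 2},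
        (∀ x, |h x| = |g x|) → h = g ∨ h = -g :=
  stmt_5_general C hconj hpr
end

section
/- Let A be a real m×n matrix of rank n and let f = A·x_f ∈ R_ℂ(A) with x_f ∈ ℂⁿ. If f is complex conjugate phase retrieval in R_ℂ(A), then the real linear subspace Ω = span_ℝ{Re(x_f), Im(x_f)} ⊆ ℝⁿ is phase retrieval with respect to A, i.e. for all x, y ∈ Ω, if |Ax| = |Ay| entrywise then y = x or y = −x. -/
open Complex Matrix ComplexConjugate

/-!
As `λ` runs over `ℂ`, `Re (λ xf)` runs over `Ω`. If `x, y ∈ Ω` satisfy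
`|Ax| = |Ay|`, then `u = x + y` and `v = x - y` lie in `Ω` and `Au`, `Av` have disjoint supports.
Suppose both are nonzero, say `u = Re (λ xf)` and `v = Re (μ xf)`. When `Im (conj λ μ) = 0` the
vectors `u` and `v` are real multiples of one another, impossible for disjoint supports. Otherwise
`λ`, `μ` are `ℝ`-independent, so `xf = c₁ u + c₂ v` with `c₁, c₂ ≠ 0`, and for every unimodular `ζ`
the vector `c₁ u + ζ c₂ v` has the same moduli under `A` as `xf`. Complex conjugate phase retrieval
then forces `ζ = 1` or `ζ = c₁ conj c₂ / (c₂ conj c₁)`, which cannot hold for both `ζ = -1`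
and `ζ = I`.
-/

theorem Matrix.mulVec_injective_of_rank_eq {m n : ℕ} {A : Matrix (Fin m) (Fin n) ℝ}
    (hA : A.rank = n) : Function.Injective A.mulVec :=
  mulVec_injective_iff.2 <| linearIndependent_iff_card_eq_finrank_span.2 <| by
    rw [Fintype.card_fin, Set.finrank, ← rank_eq_finrank_span_cols, hA]

theorem Complex.im_conj_mul_mul_eq (l μ ζ : ℂ) :
    ((conj l * μ).im : ℂ) * ζ = I * (conj μ * (l * ζ).re - conj l * (μ * ζ).re) := by
  apply Complex.ext <;>
    simp only [mul_re, mul_im, sub_re, sub_im, conj_re, conj_im, ofReal_re, ofReal_im, I_re, I_im] <;>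
    ring

theorem exists_eq_re_mul_of_mem_span {n : ℕ} {xf : Fin n → ℂ} {u : Fin n → ℝ}
    (hu : u ∈ Submodule.span ℝ ({fun j => (xf j).re, fun j => (xf j).im} : Set (Fin n → ℝ))) :
    ∃ l : ℂ, u = fun j => (l * xf j).re := by
  obtain ⟨a, b, rfl⟩ := Submodule.mem_span_pair.1 hu
  exact ⟨a - b * I, funext fun j => by simp⟩

section

variable {m n : ℕ}

theorem Matrix.map_ofReal_mulVec (A : Matrix (Fin m) (Fin n) ℝ) (u : Fin n → ℝ) :
    A.map ofReal *ᵥ (ofReal ∘ u) = ofReal ∘ (A *ᵥ u) :=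
  funext fun i => (RingHom.map_mulVec ofRealHom A u i).symm

theorem Matrix.map_ofReal_mulVec_smul_add_smul (A : Matrix (Fin m) (Fin n) ℝ) (a b : ℂ)
    (u v : Fin n → ℝ) (k : Fin m) :
    (A.map ofReal *ᵥ (a • (ofReal ∘ u) + b • (ofReal ∘ v))) k =
      a * (A *ᵥ u) k + b * (A *ᵥ v) k := by
  simp [mulVec_add, mulVec_smul, map_ofReal_mulVec]

def IsConjPhaseRetrieval (A : Matrix (Fin m) (Fin n) ℝ) (xf : Fin n → ℂ) : Prop :=
  ∀ y : Fin n → ℂ, (∀ i, ‖(A.map ofReal *ᵥ y) i‖ = ‖(A.map ofReal *ᵥ xf) i‖) →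
    ∃ z : ℂ, ‖z‖ = 1 ∧
      (A.map ofReal *ᵥ y = z • A.map ofReal *ᵥ xf ∨
        A.map ofReal *ᵥ y = z • A.map ofReal *ᵥ star xf)

namespace IsConjPhaseRetrieval

variable {A : Matrix (Fin m) (Fin n) ℝ} {xf : Fin n → ℂ}

/-- The twisted vector `c₁ u + ζ c₂ v` has the same moduli under `A` as `xf = c₁ u + c₂ v`,
because `A u` and `A v` have disjoint supports. -/
theorem phase_constraint (h : IsConjPhaseRetrieval A xf) {u v : Fin n → ℝ} {c₁ c₂ : ℂ}
    (hxf : xf = c₁ • (ofReal ∘ u) + c₂ • (ofReal ∘ v))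
    (huv : ∀ k, (A *ᵥ u) k * (A *ᵥ v) k = 0) {i j : Fin m}
    (hi : (A *ᵥ u) i ≠ 0) (hj : (A *ᵥ v) j ≠ 0) {ζ : ℂ} (hζ : ‖ζ‖ = 1) :
    ζ * (c₁ * c₂) = c₁ * c₂ ∨ ζ * (c₂ * conj c₁) = c₁ * conj c₂ := by
  have hxf_star : star xf = conj c₁ • (ofReal ∘ u) + conj c₂ • (ofReal ∘ v) := by
    ext k; simp [hxf]
  have hvi : (A *ᵥ v) i = 0 := (mul_eq_zero.1 (huv i)).resolve_left hi
  have huj : (A *ᵥ u) j = 0 := (mul_eq_zero.1 (huv j)).resolve_right hj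
  have hnorm : ∀ k, ‖(A.map ofReal *ᵥ (c₁ • (ofReal ∘ u) + (ζ * c₂) • (ofReal ∘ v))) k‖ =
      ‖(A.map ofReal *ᵥ xf) k‖ := fun k => by
    rcases mul_eq_zero.1 (huv k) with hk | hk <;>
      simp [hxf, map_ofReal_mulVec_smul_add_smul, hk, hζ]
  obtain ⟨z, -, hz⟩ := h _ hnorm
  have coeff_eq : ∀ a b : ℂ, A.map ofReal *ᵥ (c₁ • (ofReal ∘ u) + (ζ * c₂) • (ofReal ∘ v)) =
      z • A.map ofReal *ᵥ (a • (ofReal ∘ u) + b • (ofReal ∘ v)) →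
        c₁ = z * a ∧ ζ * c₂ = z * b := by
    intro a b hab
    have hzi := congrFun hab i
    have hzj := congrFun hab j
    simp only [Pi.smul_apply, smul_eq_mul, map_ofReal_mulVec_smul_add_smul, hvi, huj,
      ofReal_zero, mul_zero, add_zero, zero_add] at hzi hzj
    exact ⟨mul_right_cancel₀ (ofReal_ne_zero.2 hi) (by linear_combination hzi),
      mul_right_cancel₀ (ofReal_ne_zero.2 hj) (by linear_combination hzj)⟩
  rcases hz with hz | hz
  · obtain ⟨h₁, h₂⟩ := coeff_eq c₁ c₂ (hxf ▸ hz)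
    exact .inl (by linear_combination c₁ * h₂ - c₂ * h₁)
  · obtain ⟨h₁, h₂⟩ := coeff_eq (conj c₁) (conj c₂) (hxf_star ▸ hz)
    exact .inr (by linear_combination conj c₁ * h₂ - conj c₂ * h₁)

theorem false_of_mul_mulVec_eq_zero (h : IsConjPhaseRetrieval A xf) {u v : Fin n → ℝ}
    {c₁ c₂ : ℂ} (hxf : xf = c₁ • (ofReal ∘ u) + c₂ • (ofReal ∘ v))
    (huv : ∀ k, (A *ᵥ u) k * (A *ᵥ v) k = 0) {i j : Fin m}
    (hi : (A *ᵥ u) i ≠ 0) (hj : (A *ᵥ v) j ≠ 0) (hc₁ : c₁ ≠ 0) (hc₂ : c₂ ≠ 0) : False := by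
  have hc : c₁ * c₂ ≠ 0 := mul_ne_zero hc₁ hc₂
  have hc' : c₂ * conj c₁ ≠ 0 := mul_ne_zero hc₂ ((map_ne_zero _).2 hc₁)
  rcases h.phase_constraint hxf huv hi hj (ζ := -1) (by simp) with h₁ | h₁
  · exact hc (by linear_combination -h₁ / 2)
  rcases h.phase_constraint hxf huv hi hj (ζ := I) (by simp) with h₂ | h₂
  · exact hc (by linear_combination -(1 + I) / 2 * h₂ + c₁ * c₂ / 2 * I_sq)
  · exact hc' (by linear_combination (1 - I) / 2 * (h₂ - h₁) + c₂ * conj c₁ / 2 * I_sq)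

theorem eq_zero_or_eq_zero (h : IsConjPhaseRetrieval A xf) (hA : Function.Injective A.mulVec)
    {u v : Fin n → ℝ}
    (hu : u ∈ Submodule.span ℝ ({fun j => (xf j).re, fun j => (xf j).im} : Set (Fin n → ℝ)))
    (hv : v ∈ Submodule.span ℝ ({fun j => (xf j).re, fun j => (xf j).im} : Set (Fin n → ℝ)))
    (huv : ∀ k, (A *ᵥ u) k * (A *ᵥ v) k = 0) : u = 0 ∨ v = 0 := by
  obtain ⟨l, hul⟩ := exists_eq_re_mul_of_mem_span hu
  obtain ⟨μ, hvμ⟩ := exists_eq_re_mul_of_mem_span hv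
  by_contra! ⟨hu0, hv0⟩
  have hl : l ≠ 0 := by rintro rfl; exact hu0 (hul.trans (funext fun k => by simp))
  have hμ : μ ≠ 0 := by rintro rfl; exact hv0 (hvμ.trans (funext fun k => by simp))
  obtain ⟨i, hi⟩ : ∃ i, (A *ᵥ u) i ≠ 0 :=
    Function.ne_iff.1 ((hA.ne_iff' (mulVec_zero A)).2 hu0)
  obtain ⟨j, hj⟩ : ∃ j, (A *ᵥ v) j ≠ 0 :=
    Function.ne_iff.1 ((hA.ne_iff' (mulVec_zero A)).2 hv0)
  have hvi : (A *ᵥ v) i = 0 := (mul_eq_zero.1 (huv i)).resolve_left hi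
  set D : ℝ := (conj l * μ).im
  have key : (D : ℂ) • xf = (I * conj μ) • (ofReal ∘ u) + (-(I * conj l)) • (ofReal ∘ v) :=
    funext fun k => by
      simp only [hul, hvμ, Pi.smul_apply, Pi.add_apply, smul_eq_mul, Function.comp_apply]
      rw [im_conj_mul_mul_eq]
      ring
  by_cases hD : D = 0
  · have hi' := congrArg (fun w => (A.map ofReal *ᵥ w) i) key
    rw [map_ofReal_mulVec_smul_add_smul, hvi, hD] at hi'
    exact hi (by simpa [hμ] using hi')
  · refine h.false_of_mul_mulVec_eq_zero (c₁ := (D : ℂ)⁻¹ * (I * conj μ))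
      (c₂ := (D : ℂ)⁻¹ * -(I * conj l)) ?_ huv hi hj (by simp [hD, hμ]) (by simp [hD, hl])
    rw [mul_smul _ (I * conj μ), mul_smul _ (-(I * conj l)), ← smul_add, ← key,
      inv_smul_smul₀ (ofReal_ne_zero.2 hD)]

end IsConjPhaseRetrieval

end

/-- **Corollary 2.7.**  Let `A` be a real `m × n` matrix of rank `n` and
`f = A xf ∈ R_ℂ(A)`.  If `f` is complex conjugate phase retrieval in `R_ℂ(A)`, then the
real subspace `Ω = span {Re xf, Im xf} ⊆ ℝⁿ` is phase retrieval with respect to `A`. -/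
theorem stmt_6 {m n : ℕ} (A : Matrix (Fin m) (Fin n) ℝ) (hA : A.rank = n)
    (xf : Fin n → ℂ)
    (hccpr : ∀ y : Fin n → ℂ,
        (∀ i, ‖(A.map (Complex.ofReal)).mulVec y i‖ =
          ‖(A.map (Complex.ofReal)).mulVec xf i‖) →
        ∃ z : ℂ, ‖z‖ = 1 ∧
          ((A.map (Complex.ofReal)).mulVec y = z • (A.map (Complex.ofReal)).mulVec xf ∨
            (A.map (Complex.ofReal)).mulVec y = z • (A.map (Complex.ofReal)).mulVec (star xf))) :
    ∀ x ∈ Submodule.span ℝ ({fun j => (xf j).re, fun j => (xf j).im} : Set (Fin n → ℝ)),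
      ∀ y ∈ Submodule.span ℝ ({fun j => (xf j).re, fun j => (xf j).im} : Set (Fin n → ℝ)),
        (∀ i, |A.mulVec x i| = |A.mulVec y i|) → y = x ∨ y = -x := by
  intro x hx y hy hxy
  have hdisjoint : ∀ k, (A *ᵥ (x + y)) k * (A *ᵥ (x - y)) k = 0 := fun k => by
    have hsq := congrArg (· ^ 2) (hxy k)
    simp only [sq_abs] at hsq
    simp only [mulVec_add, mulVec_sub, Pi.add_apply, Pi.sub_apply]
    linear_combination hsq
  rcases IsConjPhaseRetrieval.eq_zero_or_eq_zero (xf := xf) hccpr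
      (mulVec_injective_of_rank_eq hA) (add_mem hx hy) (sub_mem hx hy) hdisjoint with h | h
  · exact .inr (eq_neg_of_add_eq_zero_right h)
  · exact .inl (sub_eq_zero.1 h).symm
end

section
/- Let 𝒲 be a quaternion linear space of functions D → ℍ invariant under quaternion conjugation and let f ∈ 𝒲. Then f is quaternion conjugate phase retrieval in 𝒲 if and only if there do not exist u, v ∈ 𝒲 such that (i) f = u + v, (ii) Re(u(x)·v(x)*) = 0 for all x ∈ D, and (iii) Re(u(x)·v(y)* + u(y)·v(x)*) ≠ 0 for some x, y ∈ D. -/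
open Quaternion

/-- The quaternion unit `i`. -/
def quatI : Quaternion ℝ := ⟨0, 1, 0, 0⟩
/-- The quaternion unit `j`. -/
def quatJ : Quaternion ℝ := ⟨0, 0, 1, 0⟩
/-- The quaternion unit `k`. -/
def quatK : Quaternion ℝ := ⟨0, 0, 0, 1⟩

/-- The real component `f₁ = (f + f*)/2` of a quaternion-valued function. -/
noncomputable def quatComp1 {D : Type*} (f : D → Quaternion ℝ) : D → Quaternion ℝ :=
  fun x => (f x + star (f x)) / 2
/-- The `i`-component `f₂ = (-i f - (i f)*)/2` of a quaternion-valued function. -/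
noncomputable def quatComp2 {D : Type*} (f : D → Quaternion ℝ) : D → Quaternion ℝ :=
  fun x => (-(quatI * f x) - star (quatI * f x)) / 2
/-- The `j`-component `f₃ = (-j f - (j f)*)/2` of a quaternion-valued function. -/
noncomputable def quatComp3 {D : Type*} (f : D → Quaternion ℝ) : D → Quaternion ℝ :=
  fun x => (-(quatJ * f x) - star (quatJ * f x)) / 2
/-- The `k`-component `f₄ = (-k f - (k f)*)/2` of a quaternion-valued function. -/
noncomputable def quatComp4 {D : Type*} (f : D → Quaternion ℝ) : D → Quaternion ℝ :=
  fun x => (-(quatK * f x) - star (quatK * f x)) / 2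

/-!
Since `q₁ q₂* + q₂ q₁* = 2⟪q₁, q₂⟫`, the admissible `(q₁, q₂, q₃, q₄)` are exactly the images
of `1, i, j, k` under the orthogonal maps of `ℍ ≅ ℝ⁴`. Hence the functions
`q₁ f₁ + q₂ f₂ + q₃ f₃ + q₄ f₄` are the `g` with the same Gram kernel `⟪g x, g y⟫ = ⟪f x, f y⟫`
as `f` (an isometry defined on the span of the values of `f` extends to `ℍ`), and conjugate phase
retrieval says that `‖g‖ = ‖f‖` pointwise forces equal Gram kernels. Writing `f = u + v` and
`g = u - v`, i.e. `u = (f + g)/2` and `v = (f - g)/2`, the condition `‖g‖ = ‖f‖` becomes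
`⟪u x, v x⟫ = 0`, while `⟪f x, f y⟫ - ⟪g x, g y⟫ = 2 (⟪u x, v y⟫ + ⟪u y, v x⟫)`.
-/

open scoped RealInnerProductSpace

section GramKernel

variable {𝕜 E D : Type*} [RCLike 𝕜] [NormedAddCommGroup E] [InnerProductSpace 𝕜 E]

lemma inner_linearCombination_eq_of_inner_eq {f g : D → E}
    (h : ∀ x y, inner 𝕜 (g x) (g y) = inner 𝕜 (f x) (f y)) (w w' : D →₀ 𝕜) :
    inner 𝕜 (Finsupp.linearCombination 𝕜 g w) (Finsupp.linearCombination 𝕜 g w') =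
      inner 𝕜 (Finsupp.linearCombination 𝕜 f w) (Finsupp.linearCombination 𝕜 f w') := by
  induction w using Finsupp.induction_linear with
  | zero => simp
  | add w₁ w₂ h₁ h₂ => simp only [map_add, inner_add_left, h₁, h₂]
  | single x a =>
    induction w' using Finsupp.induction_linear with
    | zero => simp
    | add w₁ w₂ h₁ h₂ => simp only [map_add, inner_add_right, h₁, h₂]
    | single y b => simp [inner_smul_left, inner_smul_right, h]

lemma exists_linearIsometry_apply_eq_of_inner_eq [FiniteDimensional 𝕜 E] {f g : D → E}
    (h : ∀ x y, inner 𝕜 (g x) (g y) = inner 𝕜 (f x) (f y)) :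
    ∃ U : E →ₗᵢ[𝕜] E, ∀ x, U (f x) = g x := by
  set L := Finsupp.linearCombination 𝕜 f
  set L' := Finsupp.linearCombination 𝕜 g
  have hL := inner_linearCombination_eq_of_inner_eq h
  have hker : LinearMap.ker L ≤ LinearMap.ker L' := fun w hw => by
    rw [LinearMap.mem_ker] at hw ⊢
    rw [← inner_self_eq_zero (𝕜 := 𝕜), hL, hw, inner_zero_left]
  let T : LinearMap.range L →ₗ[𝕜] E :=
    (LinearMap.ker L).liftQ L' hker ∘ₗ L.quotKerEquivRange.symm.toLinearMap
  have hT : ∀ w, T (L.rangeRestrict w) = L' w := fun w => by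
    have : L.quotKerEquivRange (Submodule.Quotient.mk w) = L.rangeRestrict w :=
      Subtype.ext (L.quotKerEquivRange_apply_mk w)
    simp [T, ← this]
  have hTinner : ∀ s t, inner 𝕜 (T s) (T t) = inner 𝕜 s t := by
    intro s t
    obtain ⟨w, rfl⟩ := L.surjective_rangeRestrict s
    obtain ⟨w', rfl⟩ := L.surjective_rangeRestrict t
    rw [hT, hT]
    exact hL w w'
  refine ⟨(T.isometryOfInner hTinner).extend, fun x => ?_⟩
  have hfx : L.rangeRestrict (Finsupp.single x 1) = f x := by simp [L]
  rw [← hfx, LinearIsometry.extend_apply, LinearMap.coe_isometryOfInner, hT]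
  simp [L']

end GramKernel

section RealInnerProductSpace

variable {F : Type*} [NormedAddCommGroup F] [InnerProductSpace ℝ F]

lemma orthonormal_vecCons_four_iff {v₁ v₂ v₃ v₄ : F} :
    Orthonormal ℝ ![v₁, v₂, v₃, v₄] ↔ ‖v₁‖ = 1 ∧ ‖v₂‖ = 1 ∧ ‖v₃‖ = 1 ∧ ‖v₄‖ = 1 ∧
      ⟪v₁, v₂⟫ = 0 ∧ ⟪v₁, v₃⟫ = 0 ∧ ⟪v₁, v₄⟫ = 0 ∧ ⟪v₂, v₃⟫ = 0 ∧ ⟪v₂, v₄⟫ = 0 ∧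
      ⟪v₃, v₄⟫ = 0 := by
  simp [Orthonormal, Pairwise, Fin.forall_fin_succ, real_inner_comm v₁ v₂, real_inner_comm v₁ v₃,
    real_inner_comm v₁ v₄, real_inner_comm v₂ v₃, real_inner_comm v₂ v₄, real_inner_comm v₃ v₄]
  tauto

lemma Orthonormal.inner_vecCons_four {v₁ v₂ v₃ v₄ : F} (hv : Orthonormal ℝ ![v₁, v₂, v₃, v₄])
    (a₀ a₁ a₂ a₃ b₀ b₁ b₂ b₃ : ℝ) :
    ⟪a₀ • v₁ + a₁ • v₂ + a₂ • v₃ + a₃ • v₄, b₀ • v₁ + b₁ • v₂ + b₂ • v₃ + b₃ • v₄⟫ =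
      a₀ * b₀ + a₁ * b₁ + a₂ * b₂ + a₃ * b₃ := by
  simpa [Fin.sum_univ_four] using hv.inner_sum ![a₀, a₁, a₂, a₃] ![b₀, b₁, b₂, b₃] Finset.univ

lemma inner_add_apply_sub_inner_sub_apply {D : Type*} (u v : D → F) (x y : D) :
    ⟪(u + v) x, (u + v) y⟫ - ⟪(u - v) x, (u - v) y⟫ = 2 * (⟪u x, v y⟫ + ⟪u y, v x⟫) := by
  simp only [Pi.add_apply, Pi.sub_apply, inner_add_left, inner_add_right, inner_sub_left,
    inner_sub_right, real_inner_comm (u y) (v x)]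
  ring

theorem setOf_norm_eq_eq_setOf_inner_eq_iff {D : Type*} (W : AddSubgroup (D → F))
    (hW : ∀ h ∈ W, (2⁻¹ : ℝ) • h ∈ W) {f : D → F} (hf : f ∈ W) :
    {g | g ∈ W ∧ ∀ x, ‖g x‖ = ‖f x‖} = {g | g ∈ W ∧ ∀ x y, ⟪g x, g y⟫ = ⟪f x, f y⟫} ↔
      ¬ ∃ u ∈ W, ∃ v ∈ W, f = u + v ∧ (∀ x, ⟪u x, v x⟫ = 0) ∧
        ∃ x y, ⟪u x, v y⟫ + ⟪u y, v x⟫ ≠ 0 := by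
  constructor
  · rintro hset ⟨u, hu, v, hv, rfl, hperp, x, y, hxy⟩
    have hmem : u - v ∈ {g | g ∈ W ∧ ∀ x, ‖g x‖ = ‖(u + v) x‖} :=
      ⟨W.sub_mem hu hv, fun x => norm_sub_eq_norm_add ((real_inner_comm _ _).trans (hperp x))⟩
    rw [hset] at hmem
    have hgram := inner_add_apply_sub_inner_sub_apply u v x y
    rw [hmem.2 x y, sub_self] at hgram
    exact hxy (by linarith)
  · intro hno
    push Not at hno
    refine subset_antisymm ?_ ?_
    · rintro g ⟨hg, hnorm⟩
      refine ⟨hg, fun x y => ?_⟩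
      set u := (2⁻¹ : ℝ) • (f + g)
      set v := (2⁻¹ : ℝ) • (f - g)
      have hf_eq : f = u + v := by
        ext1; simp only [u, v, Pi.add_apply, Pi.smul_apply, Pi.sub_apply]; module
      have hg_eq : g = u - v := by
        ext1; simp only [u, v, Pi.sub_apply, Pi.smul_apply, Pi.add_apply]; module
      have hperp : ∀ x, ⟪u x, v x⟫ = 0 := fun x => by
        simp only [u, v, Pi.smul_apply, Pi.add_apply, Pi.sub_apply, real_inner_smul_left,
          real_inner_smul_right, (real_inner_add_sub_eq_zero_iff _ _).2 (hnorm x).symm, mul_zero]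
      have hcross := hno u (hW _ (W.add_mem hf hg)) v (hW _ (W.sub_mem hf hg)) hf_eq hperp x y
      have hgram := inner_add_apply_sub_inner_sub_apply u v x y
      rw [← hf_eq, ← hg_eq, hcross, mul_zero] at hgram
      linarith
    · rintro g ⟨hg, hinner⟩
      refine ⟨hg, fun x => ?_⟩
      have hxx := hinner x x
      rw [real_inner_self_eq_norm_sq, real_inner_self_eq_norm_sq] at hxx
      exact (pow_left_inj₀ (norm_nonneg _) (norm_nonneg _) two_ne_zero).1 hxx

end RealInnerProductSpace

@[simp] lemma quatI_re : quatI.re = 0 := rfl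
@[simp] lemma quatI_imI : quatI.imI = 1 := rfl
@[simp] lemma quatI_imJ : quatI.imJ = 0 := rfl
@[simp] lemma quatI_imK : quatI.imK = 0 := rfl
@[simp] lemma quatJ_re : quatJ.re = 0 := rfl
@[simp] lemma quatJ_imI : quatJ.imI = 0 := rfl
@[simp] lemma quatJ_imJ : quatJ.imJ = 1 := rfl
@[simp] lemma quatJ_imK : quatJ.imK = 0 := rfl
@[simp] lemma quatK_re : quatK.re = 0 := rfl
@[simp] lemma quatK_imI : quatK.imI = 0 := rfl
@[simp] lemma quatK_imJ : quatK.imJ = 0 := rfl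
@[simp] lemma quatK_imK : quatK.imK = 1 := rfl

namespace Quaternion

lemma re_mul_star (a b : ℍ) : (a * star b).re = ⟪a, b⟫ := (inner_def a b).symm

lemma mul_star_add_mul_star_eq_zero_iff {p q : ℍ} :
    p * star q + q * star p = 0 ↔ ⟪p, q⟫ = 0 := by
  rw [show q * star p = star (p * star q) by simp, self_add_star', ← coe_zero, coe_inj,
    re_mul_star]
  simp

lemma div_two_eq_smul (a : ℍ) : a / 2 = (2⁻¹ : ℝ) • a := by
  rw [div_eq_mul_inv, ← mul_coe_eq_smul, coe_inv]
  rfl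

lemma eq_re_smul_one_add (a : ℍ) :
    a = a.re • 1 + a.imI • quatI + a.imJ • quatJ + a.imK • quatK := by
  ext <;> simp

end Quaternion

section Components

variable {D : Type*} (f : D → ℍ) (x : D)

lemma quatComp1_apply : quatComp1 f x = (f x).re := by
  ext <;> simp [quatComp1, Quaternion.div_two_eq_smul, ← two_mul]

lemma quatComp2_apply : quatComp2 f x = (f x).imI := by
  ext <;> simp [quatComp2, Quaternion.div_two_eq_smul, Quaternion.re_mul, Quaternion.imI_mul,
    Quaternion.imJ_mul, Quaternion.imK_mul, ← two_mul]

lemma quatComp3_apply : quatComp3 f x = (f x).imJ := by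
  ext <;> simp [quatComp3, Quaternion.div_two_eq_smul, Quaternion.re_mul, Quaternion.imI_mul,
    Quaternion.imJ_mul, Quaternion.imK_mul, ← two_mul]

lemma quatComp4_apply : quatComp4 f x = (f x).imK := by
  ext <;> simp [quatComp4, Quaternion.div_two_eq_smul, Quaternion.re_mul, Quaternion.imI_mul,
    Quaternion.imJ_mul, Quaternion.imK_mul, ← two_mul]

end Components

lemma orthonormal_one_quatI_quatJ_quatK : Orthonormal ℝ ![(1 : ℍ), quatI, quatJ, quatK] := by
  rw [orthonormal_vecCons_four_iff]
  simp only [← pow_eq_one_iff_of_nonneg (norm_nonneg _) two_ne_zero, ← real_inner_self_eq_norm_sq,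
    Quaternion.inner_def, Quaternion.re_mul]
  simp

lemma map_eq_mul_re_add {F : Type*} [FunLike F ℍ ℍ] [LinearMapClass F ℝ ℍ ℍ] (U : F) (a : ℍ) :
    U a = U 1 * a.re + U quatI * a.imI + U quatJ * a.imJ + U quatK * a.imK := by
  conv_lhs => rw [Quaternion.eq_re_smul_one_add a]
  simp only [map_add, map_smul, Quaternion.mul_coe_eq_smul]

lemma inner_mul_re_add_of_orthonormal {q₁ q₂ q₃ q₄ : ℍ} (hq : Orthonormal ℝ ![q₁, q₂, q₃, q₄])
    (a b : ℍ) :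
    ⟪q₁ * a.re + q₂ * a.imI + q₃ * a.imJ + q₄ * a.imK,
      q₁ * b.re + q₂ * b.imI + q₃ * b.imJ + q₄ * b.imK⟫ = ⟪a, b⟫ := by
  simp only [Quaternion.mul_coe_eq_smul]
  rw [hq.inner_vecCons_four, ← orthonormal_one_quatI_quatJ_quatK.inner_vecCons_four,
    ← Quaternion.eq_re_smul_one_add, ← Quaternion.eq_re_smul_one_add]

lemma exists_orthonormal_combination_iff_inner_eq {D : Type*} (f g : D → ℍ) :
    (∃ q₁ q₂ q₃ q₄ : ℍ, ‖q₁‖ = 1 ∧ ‖q₂‖ = 1 ∧ ‖q₃‖ = 1 ∧ ‖q₄‖ = 1 ∧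
      q₁ * star q₂ + q₂ * star q₁ = 0 ∧ q₁ * star q₃ + q₃ * star q₁ = 0 ∧
      q₁ * star q₄ + q₄ * star q₁ = 0 ∧ q₂ * star q₃ + q₃ * star q₂ = 0 ∧
      q₂ * star q₄ + q₄ * star q₂ = 0 ∧ q₃ * star q₄ + q₄ * star q₃ = 0 ∧
      g = fun x => q₁ * quatComp1 f x + q₂ * quatComp2 f x +
        q₃ * quatComp3 f x + q₄ * quatComp4 f x) ↔
    ∀ x y, ⟪g x, g y⟫ = ⟪f x, f y⟫ := by
  simp only [Quaternion.mul_star_add_mul_star_eq_zero_iff, quatComp1_apply, quatComp2_apply,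
    quatComp3_apply, quatComp4_apply]
  constructor
  · rintro ⟨q₁, q₂, q₃, q₄, h₁, h₂, h₃, h₄, o₁₂, o₁₃, o₁₄, o₂₃, o₂₄, o₃₄, rfl⟩ x y
    exact inner_mul_re_add_of_orthonormal
      (orthonormal_vecCons_four_iff.2 ⟨h₁, h₂, h₃, h₄, o₁₂, o₁₃, o₁₄, o₂₃, o₂₄, o₃₄⟩) _ _
  · intro h
    obtain ⟨U, hU⟩ := exists_linearIsometry_apply_eq_of_inner_eq h
    refine ⟨U 1, U quatI, U quatJ, U quatK, ?_⟩
    obtain ⟨h₁, h₂, h₃, h₄, o₁₂, o₁₃, o₁₄, o₂₃, o₂₄, o₃₄⟩ :=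
      orthonormal_vecCons_four_iff.1 orthonormal_one_quatI_quatJ_quatK
    simp only [LinearIsometry.norm_map, LinearIsometry.inner_map_map]
    exact ⟨h₁, h₂, h₃, h₄, o₁₂, o₁₃, o₁₄, o₂₃, o₂₄, o₃₄,
      funext fun x => (hU x).symm.trans (map_eq_mul_re_add U (f x))⟩

theorem stmt_9_general {D : Type*} (W : AddSubgroup (D → Quaternion ℝ))
    (hmul : ∀ q : Quaternion ℝ, ∀ f ∈ W, (fun x => q * f x) ∈ W)
    (f : D → Quaternion ℝ) (hf : f ∈ W) :
    ({g : D → Quaternion ℝ | g ∈ W ∧ ∀ x, ‖g x‖ = ‖f x‖} =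
        {g : D → Quaternion ℝ | g ∈ W ∧ ∃ q₁ q₂ q₃ q₄ : Quaternion ℝ,
          ‖q₁‖ = 1 ∧ ‖q₂‖ = 1 ∧ ‖q₃‖ = 1 ∧ ‖q₄‖ = 1 ∧
          q₁ * star q₂ + q₂ * star q₁ = 0 ∧ q₁ * star q₃ + q₃ * star q₁ = 0 ∧
          q₁ * star q₄ + q₄ * star q₁ = 0 ∧ q₂ * star q₃ + q₃ * star q₂ = 0 ∧
          q₂ * star q₄ + q₄ * star q₂ = 0 ∧ q₃ * star q₄ + q₄ * star q₃ = 0 ∧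
          g = fun x => q₁ * quatComp1 f x + q₂ * quatComp2 f x +
            q₃ * quatComp3 f x + q₄ * quatComp4 f x}) ↔
      ¬ ∃ u ∈ W, ∃ v ∈ W, f = u + v ∧
          (∀ x, (u x * star (v x)).re = 0) ∧
          (∃ x y, (u x * star (v y) + u y * star (v x)).re ≠ 0) := by
  have hhalf : ∀ h ∈ W, (2⁻¹ : ℝ) • h ∈ W := fun h hh => by
    simpa only [Quaternion.coe_mul_eq_smul, ← Pi.smul_def] using hmul (2⁻¹ : ℝ) h hh
  simp only [exists_orthonormal_combination_iff_inner_eq, Quaternion.re_add,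
    Quaternion.re_mul_star]
  exact setOf_norm_eq_eq_setOf_inner_eq_iff W hhalf hf

/-- **Theorem 2.10(i) (quaternion conjugate phase retrieval of a function).**
Let `W` be a quaternion linear space of functions `D → ℍ` invariant under quaternion
conjugation, and `f ∈ W`.  Then `f` is quaternion conjugate phase retrieval in `W` iff
there do not exist `u, v ∈ W` with `f = u + v`, `Re (u x · v x*) = 0` for all `x`, and
`Re (u x · v y* + u y · v x*) ≠ 0` for some `x, y`. -/
theorem stmt_9 {D : Type*} [Nonempty D] (W : AddSubgroup (D → Quaternion ℝ))
    (hmul : ∀ q : Quaternion ℝ, ∀ f ∈ W, (fun x => q * f x) ∈ W)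
    (hstar : ∀ q : Quaternion ℝ, ∀ f ∈ W, (fun x => star (q * f x)) ∈ W)
    (f : D → Quaternion ℝ) (hf : f ∈ W) :
    ({g : D → Quaternion ℝ | g ∈ W ∧ ∀ x, ‖g x‖ = ‖f x‖} =
        {g : D → Quaternion ℝ | g ∈ W ∧ ∃ q₁ q₂ q₃ q₄ : Quaternion ℝ,
          ‖q₁‖ = 1 ∧ ‖q₂‖ = 1 ∧ ‖q₃‖ = 1 ∧ ‖q₄‖ = 1 ∧
          q₁ * star q₂ + q₂ * star q₁ = 0 ∧ q₁ * star q₃ + q₃ * star q₁ = 0 ∧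
          q₁ * star q₄ + q₄ * star q₁ = 0 ∧ q₂ * star q₃ + q₃ * star q₂ = 0 ∧
          q₂ * star q₄ + q₄ * star q₂ = 0 ∧ q₃ * star q₄ + q₄ * star q₃ = 0 ∧
          g = fun x => q₁ * quatComp1 f x + q₂ * quatComp2 f x +
            q₃ * quatComp3 f x + q₄ * quatComp4 f x}) ↔
      ¬ ∃ u ∈ W, ∃ v ∈ W, f = u + v ∧
          (∀ x, (u x * star (v x)).re = 0) ∧
          (∃ x y, (u x * star (v y) + u y * star (v x)).re ≠ 0) :=
  stmt_9_general W hmul f hf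
end

section
/- Let 𝒲 be a quaternion linear space of functions D → ℍ invariant under quaternion conjugation. Then 𝒲 is quaternion conjugate phase retrieval if and only if there do not exist u, v ∈ 𝒲 such that Re(u(x)·v(x)*) = 0 for all x ∈ D and Re(u(x)·v(y)* + u(y)·v(x)*) ≠ 0 for some x, y ∈ D. -/
open Quaternion

open scoped RealInnerProductSpace


namespace QCPRaux

@[simp] lemma quatI_re : quatI.re = 0 := rfl
@[simp] lemma quatI_imI : quatI.imI = 1 := rfl
@[simp] lemma quatI_imJ : quatI.imJ = 0 := rfl
@[simp] lemma quatI_imK : quatI.imK = 0 := rfl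
@[simp] lemma quatJ_re : quatJ.re = 0 := rfl
@[simp] lemma quatJ_imI : quatJ.imI = 0 := rfl
@[simp] lemma quatJ_imJ : quatJ.imJ = 1 := rfl
@[simp] lemma quatJ_imK : quatJ.imK = 0 := rfl
@[simp] lemma quatK_re : quatK.re = 0 := rfl
@[simp] lemma quatK_imI : quatK.imI = 0 := rfl
@[simp] lemma quatK_imJ : quatK.imJ = 0 := rfl
@[simp] lemma quatK_imK : quatK.imK = 1 := rfl

lemma inner_expand (a b : ℍ) :
    ⟪a, b⟫ = a.re * b.re + a.imI * b.imI + a.imJ * b.imJ + a.imK * b.imK := by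
  simp only [Quaternion.inner_def, Quaternion.re_mul, Quaternion.re_star, Quaternion.imI_star,
    Quaternion.imJ_star, Quaternion.imK_star]
  ring

lemma re_eq_inner (a b : ℍ) : (a * star b).re = ⟪a, b⟫ := rfl

lemma coe_inv_two : ((2 : ℝ) : ℍ)⁻¹ = ((2⁻¹ : ℝ) : ℍ) := by
  refine (inv_eq_of_mul_eq_one_right ?_)
  rw [← Quaternion.coe_mul]; norm_num

lemma two_eq : (2 : ℍ) = ((2 : ℝ) : ℍ) := by
  norm_cast

lemma div_two (a : ℍ) : a / 2 = (2⁻¹ : ℝ) • a := by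
  rw [div_eq_mul_inv, two_eq, coe_inv_two, Quaternion.mul_coe_eq_smul]

lemma decomp (a : ℍ) :
    a = a.re • (1 : ℍ) + a.imI • quatI + a.imJ • quatJ + a.imK • quatK := by
  ext <;> simp

lemma q_add_star (a b : ℍ) : a * star b + b * star a = ((2 * ⟪a, b⟫ : ℝ) : ℍ) := by
  have : b * star a = star (a * star b) := by simp [mul_comm]
  rw [this, Quaternion.self_add_star', re_eq_inner]

lemma q_cond_iff (a b : ℍ) : a * star b + b * star a = 0 ↔ ⟪a, b⟫ = 0 := by
  rw [q_add_star]
  constructor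
  · intro h
    have := Quaternion.coe_injective (by simpa using h : ((2 * ⟪a,b⟫ : ℝ) : ℍ) = ((0:ℝ) : ℍ))
    linarith
  · intro h; rw [h]; norm_num

lemma comp1_eq {D : Type*} (f : D → ℍ) (x : D) : quatComp1 f x = ((f x).re : ℍ) := by
  show (f x + star (f x)) / 2 = _
  rw [Quaternion.self_add_star', div_two, Quaternion.smul_coe, Quaternion.coe_inj]
  ring

lemma comp2_eq {D : Type*} (f : D → ℍ) (x : D) : quatComp2 f x = ((f x).imI : ℍ) := by
  show (-(quatI * f x) - star (quatI * f x)) / 2 = _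
  have h : -(quatI * f x) - star (quatI * f x) = ((2 * (f x).imI : ℝ) : ℍ) := by
    ext <;> simp [Quaternion.re_mul, Quaternion.imI_mul, Quaternion.imJ_mul,
      Quaternion.imK_mul] <;> ring
  rw [h, div_two, Quaternion.smul_coe, Quaternion.coe_inj]
  ring

lemma comp3_eq {D : Type*} (f : D → ℍ) (x : D) : quatComp3 f x = ((f x).imJ : ℍ) := by
  show (-(quatJ * f x) - star (quatJ * f x)) / 2 = _
  have h : -(quatJ * f x) - star (quatJ * f x) = ((2 * (f x).imJ : ℝ) : ℍ) := by
    ext <;> simp [Quaternion.re_mul, Quaternion.imI_mul, Quaternion.imJ_mul,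
      Quaternion.imK_mul] <;> ring
  rw [h, div_two, Quaternion.smul_coe, Quaternion.coe_inj]
  ring

lemma comp4_eq {D : Type*} (f : D → ℍ) (x : D) : quatComp4 f x = ((f x).imK : ℍ) := by
  show (-(quatK * f x) - star (quatK * f x)) / 2 = _
  have h : -(quatK * f x) - star (quatK * f x) = ((2 * (f x).imK : ℝ) : ℍ) := by
    ext <;> simp [Quaternion.re_mul, Quaternion.imI_mul, Quaternion.imJ_mul,
      Quaternion.imK_mul] <;> ring
  rw [h, div_two, Quaternion.smul_coe, Quaternion.coe_inj]
  ring

lemma norm_one_iff (a : ℍ) : ‖a‖ = 1 ↔ ⟪a, a⟫ = 1 := by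
  rw [real_inner_self_eq_norm_mul_norm]
  constructor
  · intro h; rw [h]; norm_num
  · intro h; nlinarith [norm_nonneg a]

lemma norm_eq_of_inner (a b : ℍ) (h : ⟪a, a⟫ = ⟪b, b⟫) : ‖a‖ = ‖b‖ := by
  rw [norm_eq_sqrt_real_inner, norm_eq_sqrt_real_inner, h]

lemma inner_comb (q₁ q₂ q₃ q₄ : ℍ)
    (h11 : ⟪q₁,q₁⟫ = 1) (h22 : ⟪q₂,q₂⟫ = 1) (h33 : ⟪q₃,q₃⟫ = 1) (h44 : ⟪q₄,q₄⟫ = 1)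
    (h12 : ⟪q₁,q₂⟫ = 0) (h13 : ⟪q₁,q₃⟫ = 0) (h14 : ⟪q₁,q₄⟫ = 0)
    (h23 : ⟪q₂,q₃⟫ = 0) (h24 : ⟪q₂,q₄⟫ = 0) (h34 : ⟪q₃,q₄⟫ = 0) (a b : ℍ) :
    ⟪a.re • q₁ + a.imI • q₂ + a.imJ • q₃ + a.imK • q₄,
     b.re • q₁ + b.imI • q₂ + b.imJ • q₃ + b.imK • q₄⟫ = ⟪a, b⟫ := by
  have h21 : ⟪q₂,q₁⟫ = 0 := by rw [real_inner_comm]; exact h12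
  have h31 : ⟪q₃,q₁⟫ = 0 := by rw [real_inner_comm]; exact h13
  have h41 : ⟪q₄,q₁⟫ = 0 := by rw [real_inner_comm]; exact h14
  have h32 : ⟪q₃,q₂⟫ = 0 := by rw [real_inner_comm]; exact h23
  have h42 : ⟪q₄,q₂⟫ = 0 := by rw [real_inner_comm]; exact h24
  have h43 : ⟪q₄,q₃⟫ = 0 := by rw [real_inner_comm]; exact h34
  rw [inner_expand a b]
  simp only [inner_add_left, inner_add_right, real_inner_smul_left, real_inner_smul_right,
    h11, h22, h33, h44, h12, h13, h14, h23, h24, h34, h21, h31, h41, h32, h42, h43]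
  ring

lemma exists_isometry {D : Type*} (f g : D → ℍ)
    (h : ∀ x y, ⟪f x, f y⟫ = ⟪g x, g y⟫) :
    ∃ A : ℍ →ₗᵢ[ℝ] ℍ, ∀ x, A (f x) = g x := by
  classical
  set K : Submodule ℝ (ℍ × ℍ) := Submodule.span ℝ (Set.range fun x => (f x, g x)) with hK
  have key : ∀ p ∈ K, ∀ q ∈ K, ⟪p.1, q.1⟫ = ⟪p.2, q.2⟫ := by
    intro p hp q hq
    refine Submodule.span_induction₂
      (p := fun p q _ _ => ⟪p.1, q.1⟫ = ⟪p.2, q.2⟫) ?_ ?_ ?_ ?_ ?_ ?_ ?_ hp hq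
    · rintro _ _ ⟨x, rfl⟩ ⟨y, rfl⟩; exact h x y
    · intro y _; simp
    · intro x _; simp
    · intro x y z _ _ _ h1 h2
      simp only [Prod.fst_add, Prod.snd_add, inner_add_left, h1, h2]
    · intro x y z _ _ _ h1 h2
      simp only [Prod.fst_add, Prod.snd_add, inner_add_right, h1, h2]
    · intro r x y _ _ h1
      simp only [Prod.smul_fst, Prod.smul_snd, real_inner_smul_left, h1]
    · intro r x y _ _ h1
      simp only [Prod.smul_fst, Prod.smul_snd, real_inner_smul_right, h1]
  let φ : K →ₗ[ℝ] ℍ := (LinearMap.fst ℝ ℍ ℍ).comp K.subtype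
  have hφ : ∀ p : K, φ p = (p : ℍ × ℍ).1 := fun p => rfl
  have hφinj : Function.Injective φ := by
    intro p q hpq
    have h1 : ((p - q : K) : ℍ × ℍ).1 = 0 := by
      have hpq' : (p : ℍ × ℍ).1 = (q : ℍ × ℍ).1 := hpq
      simp only [AddSubgroupClass.coe_sub, Prod.fst_sub, hpq', sub_self]
    have h2 : ⟪((p - q : K) : ℍ × ℍ).2, ((p - q : K) : ℍ × ℍ).2⟫ = 0 := by
      rw [← key _ (p - q).2 _ (p - q).2, h1]; simp
    have h3 : ((p - q : K) : ℍ × ℍ).2 = 0 := by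
      exact inner_self_eq_zero.mp h2
    have h4 : ((p - q : K) : ℍ × ℍ) = 0 := Prod.ext h1 h3
    have : (p - q : K) = 0 := Subtype.ext h4
    exact sub_eq_zero.mp this
  let S := LinearMap.range φ
  let e : K ≃ₗ[ℝ] S := LinearEquiv.ofInjective φ hφinj
  have hes : ∀ s : S, ((e.symm s : K) : ℍ × ℍ).1 = (s : ℍ) := by
    intro s
    have : (e (e.symm s) : ℍ) = (s : ℍ) := by rw [e.apply_symm_apply]
    rwa [LinearEquiv.ofInjective_apply] at this
  let T : S →ₗᵢ[ℝ] ℍ :=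
    { toLinearMap := (LinearMap.snd ℝ ℍ ℍ).comp (K.subtype.comp (e.symm : S →ₗ[ℝ] K))
      norm_map' := by
        intro s
        have h1 : ⟪((e.symm s : K) : ℍ × ℍ).1, ((e.symm s : K) : ℍ × ℍ).1⟫ =
            ⟪((e.symm s : K) : ℍ × ℍ).2, ((e.symm s : K) : ℍ × ℍ).2⟫ :=
          key _ (e.symm s).2 _ (e.symm s).2
        have := norm_eq_of_inner _ _ h1.symm
        simpa [hes s] using this }
  have hT : ∀ s : S, T s = ((e.symm s : K) : ℍ × ℍ).2 := fun s => rfl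
  refine ⟨T.extend, fun x => ?_⟩
  have hmem : (f x, g x) ∈ K := Submodule.subset_span ⟨x, rfl⟩
  have hfx : f x ∈ S := ⟨⟨(f x, g x), hmem⟩, rfl⟩
  have h5 : (⟨f x, hfx⟩ : S) = e ⟨(f x, g x), hmem⟩ := by
    apply Subtype.ext
    rw [LinearEquiv.ofInjective_apply]
    rfl
  have h6 : T.extend (f x) = T ⟨f x, hfx⟩ := T.extend_apply ⟨f x, hfx⟩
  rw [h6, hT, h5, e.symm_apply_apply]

lemma norm_quat_one : ‖(1 : ℍ)‖ = 1 := norm_one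
lemma norm_quatI : ‖quatI‖ = 1 := by
  rw [norm_one_iff, inner_expand]; simp
lemma norm_quatJ : ‖quatJ‖ = 1 := by
  rw [norm_one_iff, inner_expand]; simp
lemma norm_quatK : ‖quatK‖ = 1 := by
  rw [norm_one_iff, inner_expand]; simp

end QCPRaux

open QCPRaux

/-- **Theorem 2.10(ii) (quaternion conjugate phase retrieval of the space).**
Let `W` be a quaternion linear space of functions `D → ℍ` invariant under quaternion
conjugation.  Then `W` is quaternion conjugate phase retrieval iff there do not exist
`u, v ∈ W` with `Re (u x · v x*) = 0` for all `x` and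
`Re (u x · v y* + u y · v x*) ≠ 0` for some `x, y`. -/
theorem stmt_10 {D : Type*} [Nonempty D] (W : AddSubgroup (D → Quaternion ℝ))
    (hmul : ∀ q : Quaternion ℝ, ∀ f ∈ W, (fun x => q * f x) ∈ W)
    (hstar : ∀ q : Quaternion ℝ, ∀ f ∈ W, (fun x => star (q * f x)) ∈ W) :
    (∀ f ∈ W,
      {g : D → Quaternion ℝ | g ∈ W ∧ ∀ x, ‖g x‖ = ‖f x‖} =
        {g : D → Quaternion ℝ | g ∈ W ∧ ∃ q₁ q₂ q₃ q₄ : Quaternion ℝ,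
          ‖q₁‖ = 1 ∧ ‖q₂‖ = 1 ∧ ‖q₃‖ = 1 ∧ ‖q₄‖ = 1 ∧
          q₁ * star q₂ + q₂ * star q₁ = 0 ∧ q₁ * star q₃ + q₃ * star q₁ = 0 ∧
          q₁ * star q₄ + q₄ * star q₁ = 0 ∧ q₂ * star q₃ + q₃ * star q₂ = 0 ∧
          q₂ * star q₄ + q₄ * star q₂ = 0 ∧ q₃ * star q₄ + q₄ * star q₃ = 0 ∧
          g = fun x => q₁ * quatComp1 f x + q₂ * quatComp2 f x +
            q₃ * quatComp3 f x + q₄ * quatComp4 f x}) ↔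
      ¬ ∃ u ∈ W, ∃ v ∈ W,
          (∀ x, (u x * star (v x)).re = 0) ∧
          (∃ x y, (u x * star (v y) + u y * star (v x)).re ≠ 0) := by
  classical
  constructor
  · intro hPR
    rintro ⟨u, hu, v, hv, hperp, x, y, hne⟩
    set f : D → ℍ := u + v with hf
    set g : D → ℍ := u - v with hg
    have hfW : f ∈ W := W.add_mem hu hv
    have hgW : g ∈ W := W.sub_mem hu hv
    have hginM : g ∈ {g : D → ℍ | g ∈ W ∧ ∀ z, ‖g z‖ = ‖f z‖} := by
      refine ⟨hgW, fun z => ?_⟩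
      apply norm_eq_of_inner
      have hz : ⟪u z, v z⟫ = 0 := by rw [← re_eq_inner]; exact hperp z
      show ⟪u z - v z, u z - v z⟫ = ⟪u z + v z, u z + v z⟫
      rw [real_inner_sub_sub_self, real_inner_add_add_self, hz]; ring
    rw [hPR f hfW] at hginM
    obtain ⟨-, q₁, q₂, q₃, q₄, n1, n2, n3, n4, o12, o13, o14, o23, o24, o34, hcomb⟩ := hginM
    rw [q_cond_iff] at o12 o13 o14 o23 o24 o34
    rw [norm_one_iff] at n1 n2 n3 n4
    have hgz : ∀ z, g z =
        (f z).re • q₁ + (f z).imI • q₂ + (f z).imJ • q₃ + (f z).imK • q₄ := by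
      intro z
      rw [hcomb]
      simp only [comp1_eq, comp2_eq, comp3_eq, comp4_eq, Quaternion.mul_coe_eq_smul]
    have hgram : ∀ z w, ⟪g z, g w⟫ = ⟪f z, f w⟫ := by
      intro z w
      rw [hgz z, hgz w]
      exact inner_comb _ _ _ _ n1 n2 n3 n4 o12 o13 o14 o23 o24 o34 _ _
    apply hne
    have h1 : ⟪f x, f y⟫ - ⟪g x, g y⟫ = 2 * ⟪u x, v y⟫ + 2 * ⟪u y, v x⟫ := by
      show ⟪u x + v x, u y + v y⟫ - ⟪u x - v x, u y - v y⟫ = _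
      simp only [inner_add_left, inner_add_right, inner_sub_left, inner_sub_right]
      rw [real_inner_comm (v x) (u y), real_inner_comm (v y) (u x),
        real_inner_comm (u y) (u x)]
      ring
    rw [hgram x y, sub_self] at h1
    rw [Quaternion.re_add, re_eq_inner, re_eq_inner]
    linarith
  · intro hno f hf
    push_neg at hno
    ext g
    simp only [Set.mem_setOf_eq]
    constructor
    · rintro ⟨hgW, hnorm⟩
      have hperp : ∀ z, (((f + g) z) * star ((f - g) z)).re = 0 := by
        intro z
        rw [re_eq_inner]
        show ⟪f z + g z, f z - g z⟫ = 0
        simp only [inner_add_left, inner_sub_right]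
        rw [real_inner_comm (g z) (f z)]
        have h2 : ⟪f z, f z⟫ = ⟪g z, g z⟫ := by
          rw [real_inner_self_eq_norm_mul_norm, real_inner_self_eq_norm_mul_norm, hnorm z]
        linarith
      have hall := hno (f + g) (W.add_mem hf hgW) (f - g) (W.sub_mem hf hgW) hperp
      have hGram : ∀ x y, ⟪f x, f y⟫ = ⟪g x, g y⟫ := by
        intro x y
        have h0 := hall x y
        rw [Quaternion.re_add, re_eq_inner, re_eq_inner] at h0
        have h1 : ⟪(f + g) x, (f - g) y⟫ + ⟪(f + g) y, (f - g) x⟫ =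
            2 * ⟪f x, f y⟫ - 2 * ⟪g x, g y⟫ := by
          show ⟪f x + g x, f y - g y⟫ + ⟪f y + g y, f x - g x⟫ = _
          simp only [inner_add_left, inner_sub_right]
          rw [real_inner_comm (g x) (f y), real_inner_comm (g y) (f x),
            real_inner_comm (f y) (f x), real_inner_comm (g y) (g x)]
          ring
        rw [h0] at h1
        linarith
      obtain ⟨A, hA⟩ := exists_isometry f g hGram
      refine ⟨hgW, A 1, A quatI, A quatJ, A quatK, ?_, ?_, ?_, ?_, ?_, ?_, ?_, ?_, ?_, ?_, ?_⟩
      · rw [A.norm_map]; exact norm_one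
      · rw [A.norm_map]; exact norm_quatI
      · rw [A.norm_map]; exact norm_quatJ
      · rw [A.norm_map]; exact norm_quatK
      · rw [q_cond_iff, A.inner_map_map, inner_expand]; simp
      · rw [q_cond_iff, A.inner_map_map, inner_expand]; simp
      · rw [q_cond_iff, A.inner_map_map, inner_expand]; simp
      · rw [q_cond_iff, A.inner_map_map, inner_expand]; simp
      · rw [q_cond_iff, A.inner_map_map, inner_expand]; simp
      · rw [q_cond_iff, A.inner_map_map, inner_expand]; simp
      · funext z
        have : g z = A (f z) := (hA z).symm
        rw [this, decomp (f z)]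
        simp only [map_add, map_smul, comp1_eq, comp2_eq, comp3_eq, comp4_eq,
          Quaternion.mul_coe_eq_smul]
    · rintro ⟨hgW, q₁, q₂, q₃, q₄, n1, n2, n3, n4, o12, o13, o14, o23, o24, o34, rfl⟩
      rw [q_cond_iff] at o12 o13 o14 o23 o24 o34
      rw [norm_one_iff] at n1 n2 n3 n4
      refine ⟨hgW, fun x => ?_⟩
      apply norm_eq_of_inner
      show ⟪q₁ * quatComp1 f x + q₂ * quatComp2 f x + q₃ * quatComp3 f x + q₄ * quatComp4 f x,
        q₁ * quatComp1 f x + q₂ * quatComp2 f x + q₃ * quatComp3 f x + q₄ * quatComp4 f x⟫ =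
        ⟪f x, f x⟫
      simp only [comp1_eq, comp2_eq, comp3_eq, comp4_eq, Quaternion.mul_coe_eq_smul]
      exact inner_comb _ _ _ _ n1 n2 n3 n4 o12 o13 o14 o23 o24 o34 _ _
end

section
/- Let H be a real separable Hilbert space, 𝒮 a unitary invariant real linear space of H-valued functions on D, and Φ a unitary invariant set of linear measurements on 𝒮 satisfying Assumption (⋆). Then f ∈ 𝒮 is phase retrieval in 𝒮 if and only if there do not exist u, v ∈ 𝒮 such that (i) f = u + v, (ii) ⟨φ(u), φ(v)⟩ = 0 for all φ ∈ Φ, and (iii) ⟨φ₀(u), φ₁(v)⟩ + ⟨φ₁(u), φ₀(v)⟩ ≠ 0 for some φ₀, φ₁ ∈ Φ. -/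
open scoped RealInnerProductSpace

/-- **Theorem 3.1 (phase retrieval of a vector-valued function).**
Let `H` be a real separable Hilbert space, `S` a unitary invariant real linear space of
`H`-valued functions on `D`, and `Φ` a unitary invariant set of linear measurements
satisfying Assumption (⋆).  Then `f ∈ S` is phase retrieval in `S` iff there do not
exist `u, v ∈ S` with `f = u + v`, `⟪φ u, φ v⟫ = 0` for all `φ ∈ Φ`, and
`⟪φ₀ u, φ₁ v⟫ + ⟪φ₁ u, φ₀ v⟫ ≠ 0` for some `φ₀, φ₁ ∈ Φ`. -/
theorem stmt_11 {D H : Type*} [Nonempty D] [NormedAddCommGroup H]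
    [InnerProductSpace ℝ H] [CompleteSpace H] [TopologicalSpace.SeparableSpace H]
    (S : Submodule ℝ (D → H)) (Φ : Set ((D → H) →ₗ[ℝ] H))
    (hS : ∀ U : H ≃ₗᵢ[ℝ] H, ∀ f ∈ S, (fun x => U (f x)) ∈ S)
    (hΦ : ∀ φ ∈ Φ, ∀ U : H ≃ₗᵢ[ℝ] H, ∀ f ∈ S, φ (fun x => U (f x)) = U (φ f))
    (hstar : ∀ f ∈ S, ∀ g ∈ S,
      (∀ φ ∈ Φ, ∀ ψ ∈ Φ, ⟪φ g, ψ g⟫ = ⟪φ f, ψ f⟫) →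
      ∃ U : H ≃ₗᵢ[ℝ] H, g = fun x => U (f x))
    (f : D → H) (hf : f ∈ S) :
    ({g : D → H | g ∈ S ∧ ∀ φ ∈ Φ, ‖φ g‖ = ‖φ f‖} =
        {g : D → H | ∃ U : H ≃ₗᵢ[ℝ] H, g = fun x => U (f x)}) ↔
      ¬ ∃ u ∈ S, ∃ v ∈ S, f = u + v ∧
          (∀ φ ∈ Φ, ⟪φ u, φ v⟫ = 0) ∧
          (∃ φ₀ ∈ Φ, ∃ φ₁ ∈ Φ, ⟪φ₀ u, φ₁ v⟫ + ⟪φ₁ u, φ₀ v⟫ ≠ 0) := by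
  constructor
  · rintro heq ⟨u, huS, v, hvS, hfuv, hinner, φ₀, hφ₀, φ₁, hφ₁, hne⟩
    set g : D → H := u - v with hg
    have hgS : g ∈ S := S.sub_mem huS hvS
    have hgM : g ∈ {g : D → H | g ∈ S ∧ ∀ φ ∈ Φ, ‖φ g‖ = ‖φ f‖} := by
      refine ⟨hgS, fun φ hφ => ?_⟩
      have h0 : ⟪φ u, φ v⟫ = 0 := hinner φ hφ
      have hsq : ‖φ g‖ ^ 2 = ‖φ f‖ ^ 2 := by
        have e1 : φ g = φ u - φ v := by rw [hg, map_sub]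
        have e2 : φ f = φ u + φ v := by rw [hfuv, map_add]
        rw [e1, e2, norm_sub_sq_real, norm_add_sq_real, h0]; ring
      have := congrArg Real.sqrt hsq
      simpa [Real.sqrt_sq, norm_nonneg] using this
    rw [heq] at hgM
    obtain ⟨U, hU⟩ := hgM
    have key : ⟪φ₀ g, φ₁ g⟫ = ⟪φ₀ f, φ₁ f⟫ := by
      rw [hU, hΦ φ₀ hφ₀ U f hf, hΦ φ₁ hφ₁ U f hf,
        LinearIsometryEquiv.inner_map_map]
    have e0 : φ₀ g = φ₀ u - φ₀ v := by rw [hg, map_sub]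
    have e1 : φ₁ g = φ₁ u - φ₁ v := by rw [hg, map_sub]
    have e2 : φ₀ f = φ₀ u + φ₀ v := by rw [hfuv, map_add]
    have e3 : φ₁ f = φ₁ u + φ₁ v := by rw [hfuv, map_add]
    rw [e0, e1, e2, e3] at key
    simp only [inner_sub_left, inner_sub_right, inner_add_left, inner_add_right] at key
    apply hne
    have hc : ⟪φ₀ v, φ₁ u⟫ = ⟪φ₁ u, φ₀ v⟫ := real_inner_comm _ _
    linarith
  · intro hno
    ext g
    simp only [Set.mem_setOf_eq]
    constructor
    · rintro ⟨hgS, hgnorm⟩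
      set u : D → H := (2⁻¹ : ℝ) • (f + g) with hu
      set v : D → H := (2⁻¹ : ℝ) • (f - g) with hv
      have huS : u ∈ S := S.smul_mem _ (S.add_mem hf hgS)
      have hvS : v ∈ S := S.smul_mem _ (S.sub_mem hf hgS)
      have hfuv : f = u + v := by
        rw [hu, hv]; ext x; simp [smul_add, smul_sub]
        module
      have hguv : g = u - v := by
        rw [hu, hv]; ext x; simp [smul_add, smul_sub]
        module
      have hinner : ∀ φ ∈ Φ, ⟪φ u, φ v⟫ = 0 := by
        intro φ hφ
        have hn : ‖φ g‖ ^ 2 = ‖φ f‖ ^ 2 := by rw [hgnorm φ hφ]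
        have eu : φ u = (2⁻¹ : ℝ) • (φ f + φ g) := by
          rw [hu, map_smul, map_add]
        have ev : φ v = (2⁻¹ : ℝ) • (φ f - φ g) := by
          rw [hv, map_smul, map_sub]
        rw [eu, ev, real_inner_smul_left, real_inner_smul_right,
          inner_add_left, inner_sub_right, inner_sub_right,
          real_inner_self_eq_norm_sq, real_inner_self_eq_norm_sq,
          real_inner_comm (φ g) (φ f)]
        rw [← hn]; ring
      have hcross : ∀ φ₀ ∈ Φ, ∀ φ₁ ∈ Φ, ⟪φ₀ u, φ₁ v⟫ + ⟪φ₁ u, φ₀ v⟫ = 0 := by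
        intro φ₀ hφ₀ φ₁ hφ₁
        by_contra hne
        exact hno ⟨u, huS, v, hvS, hfuv, hinner, φ₀, hφ₀, φ₁, hφ₁, hne⟩
      have hpoly : ∀ φ ∈ Φ, ∀ ψ ∈ Φ, ⟪φ g, ψ g⟫ = ⟪φ f, ψ f⟫ := by
        intro φ hφ ψ hψ
        have e0 : φ g = φ u - φ v := by rw [hguv, map_sub]
        have e1 : ψ g = ψ u - ψ v := by rw [hguv, map_sub]
        have e2 : φ f = φ u + φ v := by rw [hfuv, map_add]
        have e3 : ψ f = ψ u + ψ v := by rw [hfuv, map_add]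
        rw [e0, e1, e2, e3]
        simp only [inner_sub_left, inner_sub_right, inner_add_left, inner_add_right]
        have h1 := hcross φ hφ ψ hψ
        have hc : ⟪φ v, ψ u⟫ = ⟪ψ u, φ v⟫ := real_inner_comm _ _
        linarith
      exact hstar f hf g hgS hpoly
    · rintro ⟨U, hU⟩
      refine ⟨hU ▸ hS U f hf, fun φ hφ => ?_⟩
      rw [hU, hΦ φ hφ U f hf, U.norm_map]
end

section
/- Let H be a real separable Hilbert space, 𝒮 a unitary invariant real linear space of H-valued functions on D, and Φ a unitary invariant set of linear measurements on 𝒮 satisfying Assumption (⋆). Then 𝒮 is phase retrieval if and only if there do not exist u, v ∈ 𝒮 such that ⟨φ(u), φ(v)⟩ = 0 for all φ ∈ Φ and ⟨φ₀(u), φ₁(v)⟩ + ⟨φ₁(u), φ₀(v)⟩ ≠ 0 for some φ₀, φ₁ ∈ Φ. -/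
open scoped RealInnerProductSpace

private lemma inner_cross {H : Type*} [NormedAddCommGroup H] [InnerProductSpace ℝ H]
    (a b c d : H) :
    ⟪a + b, c + d⟫ - ⟪a - b, c - d⟫ = 2 * (⟪a, d⟫ + ⟪b, c⟫) := by
  simp only [inner_add_left, inner_add_right, inner_sub_left, inner_sub_right]
  ring

private lemma inner_zero_of_norm_eq' {H : Type*} [NormedAddCommGroup H]
    [InnerProductSpace ℝ H] {a b : H} (h : ‖a + b‖ = ‖a - b‖) : ⟪a, b⟫ = 0 := by
  have h2 : ⟪a + b, a + b⟫ = ⟪a - b, a - b⟫ := by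
    rw [real_inner_self_eq_norm_mul_norm, real_inner_self_eq_norm_mul_norm, h]
  have hc := real_inner_comm a b
  have := inner_cross a b a b
  linarith

private lemma norm_sub_eq_norm_add' {H : Type*} [NormedAddCommGroup H]
    [InnerProductSpace ℝ H] {a b : H} (h : ⟪a, b⟫ = 0) : ‖a - b‖ = ‖a + b‖ := by
  have h1 := norm_add_sq_real a b
  have h2 := norm_sub_sq_real a b
  have hsq : ‖a - b‖ ^ 2 = ‖a + b‖ ^ 2 := by rw [h1, h2, h]; ring
  rw [← Real.sqrt_sq (norm_nonneg (a - b)), ← Real.sqrt_sq (norm_nonneg (a + b)), hsq]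

/-- **Theorem 3.2 (phase retrieval of a unitary invariant space).**
Let `H` be a real separable Hilbert space, `S` a unitary invariant real linear space of
`H`-valued functions on `D`, and `Φ` a unitary invariant set of linear measurements
satisfying Assumption (⋆).  Then `S` is phase retrieval iff there do not exist
`u, v ∈ S` with `⟪φ u, φ v⟫ = 0` for all `φ ∈ Φ` and
`⟪φ₀ u, φ₁ v⟫ + ⟪φ₁ u, φ₀ v⟫ ≠ 0` for some `φ₀, φ₁ ∈ Φ`. -/
theorem stmt_12 {D H : Type*} [Nonempty D] [NormedAddCommGroup H]
    [InnerProductSpace ℝ H] [CompleteSpace H] [TopologicalSpace.SeparableSpace H]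
    (S : Submodule ℝ (D → H)) (Φ : Set ((D → H) →ₗ[ℝ] H))
    (hS : ∀ U : H ≃ₗᵢ[ℝ] H, ∀ f ∈ S, (fun x => U (f x)) ∈ S)
    (hΦ : ∀ φ ∈ Φ, ∀ U : H ≃ₗᵢ[ℝ] H, ∀ f ∈ S, φ (fun x => U (f x)) = U (φ f))
    (hstar : ∀ f ∈ S, ∀ g ∈ S,
      (∀ φ ∈ Φ, ∀ ψ ∈ Φ, ⟪φ g, ψ g⟫ = ⟪φ f, ψ f⟫) →
      ∃ U : H ≃ₗᵢ[ℝ] H, g = fun x => U (f x)) :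
    (∀ f ∈ S,
      {g : D → H | g ∈ S ∧ ∀ φ ∈ Φ, ‖φ g‖ = ‖φ f‖} =
        {g : D → H | ∃ U : H ≃ₗᵢ[ℝ] H, g = fun x => U (f x)}) ↔
      ¬ ∃ u ∈ S, ∃ v ∈ S,
          (∀ φ ∈ Φ, ⟪φ u, φ v⟫ = 0) ∧
          (∃ φ₀ ∈ Φ, ∃ φ₁ ∈ Φ, ⟪φ₀ u, φ₁ v⟫ + ⟪φ₁ u, φ₀ v⟫ ≠ 0) := by
  constructor
  · rintro hpr ⟨u, hu, v, hv, h0, φ₀, hφ₀, φ₁, hφ₁, hne⟩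
    have hf : (u + v : D → H) ∈ S := S.add_mem hu hv
    have hg : (u - v : D → H) ∈ S := S.sub_mem hu hv
    have hmem : (u - v) ∈ {g : D → H | g ∈ S ∧ ∀ φ ∈ Φ, ‖φ g‖ = ‖φ (u + v)‖} := by
      refine ⟨hg, fun φ hφ => ?_⟩
      rw [map_sub, map_add]
      exact norm_sub_eq_norm_add' (h0 φ hφ)
    rw [hpr (u + v) hf] at hmem
    obtain ⟨U, hU⟩ := hmem
    have key : ⟪φ₀ (u - v), φ₁ (u - v)⟫ = ⟪φ₀ (u + v), φ₁ (u + v)⟫ := by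
      rw [hU, hΦ φ₀ hφ₀ U (u + v) hf, hΦ φ₁ hφ₁ U (u + v) hf]
      exact U.inner_map_map _ _
    rw [map_add, map_add, map_sub, map_sub] at key
    have hc := inner_cross (φ₀ u) (φ₀ v) (φ₁ u) (φ₁ v)
    have hcomm := real_inner_comm (φ₀ v) (φ₁ u)
    apply hne
    linarith
  · intro hno f hf
    push_neg at hno
    ext g
    simp only [Set.mem_setOf_eq]
    constructor
    · rintro ⟨hgS, hnorm⟩
      set u : D → H := (2⁻¹ : ℝ) • (g + f) with hu_def
      set v : D → H := (2⁻¹ : ℝ) • (g - f) with hv_def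
      have hu : u ∈ S := S.smul_mem _ (S.add_mem hgS hf)
      have hv : v ∈ S := S.smul_mem _ (S.sub_mem hgS hf)
      have huv : u + v = g := by rw [hu_def, hv_def]; module
      have huv' : u - v = f := by rw [hu_def, hv_def]; module
      have h0 : ∀ φ ∈ Φ, ⟪φ u, φ v⟫ = 0 := by
        intro φ hφ
        apply inner_zero_of_norm_eq'
        rw [← map_add, ← map_sub, huv, huv']
        exact hnorm φ hφ
      have hcross := hno u hu v hv h0
      apply hstar f hf g hgS
      intro φ hφ ψ hψ
      rw [← huv, ← huv', map_add, map_add, map_sub, map_sub]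
      have hc := inner_cross (φ u) (φ v) (ψ u) (ψ v)
      have hcomm := real_inner_comm (φ v) (ψ u)
      have h01 := hcross φ hφ ψ hψ
      linarith
    · rintro ⟨U, rfl⟩
      refine ⟨hS U f hf, fun φ hφ => ?_⟩
      rw [hΦ φ hφ U f hf]
      exact U.norm_map _
end

section
/- Let 𝒮 be a real linear space of real-valued functions on D and Φ a set of real-linear functionals on 𝒮 with T_Φ injective. Then f ∈ 𝒮 is phase retrieval in 𝒮 if and only if there do not exist nonzero functions u, v ∈ 𝒮 such that f = u + v and φ(u)·φ(v) = 0 for all φ ∈ Φ. -/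
/-- **Corollary 3.4 (scalar setting).**  Let `S` be a real linear space of real-valued
functions on `D` and `Φ` a set of linear functionals with `T_Φ` injective on `S`.  Then
`f ∈ S` is phase retrieval in `S` iff there do not exist nonzero `u, v ∈ S` with
`f = u + v` and `φ u * φ v = 0` for all `φ ∈ Φ`. -/
theorem stmt_14 {D : Type*} [Nonempty D]
    (S : Submodule ℝ (D → ℝ)) (Φ : Set ((D → ℝ) →ₗ[ℝ] ℝ))
    (hinj : ∀ f ∈ S, ∀ g ∈ S, (∀ φ ∈ Φ, φ f = φ g) → f = g)
    (f : D → ℝ) (hf : f ∈ S) :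
    ({g : D → ℝ | g ∈ S ∧ ∀ φ ∈ Φ, |φ g| = |φ f|} = {f, -f}) ↔
      ¬ ∃ u ∈ S, ∃ v ∈ S, u ≠ 0 ∧ v ≠ 0 ∧ f = u + v ∧ ∀ φ ∈ Φ, φ u * φ v = 0 := by
  constructor
  · rintro hset ⟨u, hu, v, hv, hu0, hv0, hfuv, hphi⟩
    have hmem : u - v ∈ {g : D → ℝ | g ∈ S ∧ ∀ φ ∈ Φ, |φ g| = |φ f|} := by
      refine ⟨S.sub_mem hu hv, fun φ hφ => ?_⟩
      rcases mul_eq_zero.mp (hphi φ hφ) with h0 | h0 <;>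
        simp [hfuv, map_sub, map_add, h0, abs_neg]
    rw [hset] at hmem
    rcases hmem with h | h
    · apply hv0
      have h' : u - v = u + v := by rw [← hfuv]; exact h
      funext x
      have := congrFun h' x
      simp only [Pi.sub_apply, Pi.add_apply] at this
      have : v x = 0 := by linarith
      simpa using this
    · apply hu0
      have h' : u - v = -(u + v) := by rw [← hfuv]; exact h
      funext x
      have := congrFun h' x
      simp only [Pi.sub_apply, Pi.neg_apply, Pi.add_apply] at this
      have : u x = 0 := by linarith
      simpa using this
  · intro hno
    ext g
    simp only [Set.mem_setOf_eq, Set.mem_insert_iff, Set.mem_singleton_iff]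
    constructor
    · rintro ⟨hg, habs⟩
      set u := (1/2 : ℝ) • (f + g) with hu_def
      set v := (1/2 : ℝ) • (f - g) with hv_def
      have hu : u ∈ S := S.smul_mem _ (S.add_mem hf hg)
      have hv : v ∈ S := S.smul_mem _ (S.sub_mem hf hg)
      have hfuv : f = u + v := by
        funext x
        simp only [hu_def, hv_def, Pi.add_apply, Pi.smul_apply, Pi.sub_apply, smul_eq_mul]
        ring
      have hprod : ∀ φ ∈ Φ, φ u * φ v = 0 := by
        intro φ hφ
        have h := habs φ hφ
        have h2 : (φ g)^2 = (φ f)^2 := by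
          rw [← sq_abs (φ g), ← sq_abs (φ f), h]
        simp only [hu_def, hv_def, map_smul, map_add, map_sub, smul_eq_mul]
        nlinarith [h2]
      by_cases hu0 : u = 0
      · right
        funext x
        have := congrFun hu0 x
        simp only [hu_def, Pi.smul_apply, Pi.add_apply, smul_eq_mul, Pi.zero_apply] at this
        simp only [Pi.neg_apply]
        linarith
      by_cases hv0 : v = 0
      · left
        funext x
        have := congrFun hv0 x
        simp only [hv_def, Pi.smul_apply, Pi.sub_apply, smul_eq_mul, Pi.zero_apply] at this
        linarith
      exact absurd ⟨u, hu, v, hv, hu0, hv0, hfuv, hprod⟩ hno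
    · rintro (rfl | rfl)
      · exact ⟨hf, fun φ _ => rfl⟩
      · exact ⟨S.neg_mem hf, fun φ hφ => by simp⟩
end

section
/- Let 𝒮 be a real linear space of real-valued functions on D and Φ a set of real-linear functionals on 𝒮 with T_Φ injective. Then 𝒮 is phase retrieval if and only if Φ has the complement property: for every subset Φ̃ ⊆ Φ, either {f ∈ 𝒮 : φ(f) = 0 for all φ ∈ Φ̃} = {0} or {f ∈ 𝒮 : φ(f) = 0 for all φ ∈ Φ∖Φ̃} = {0}. -/
/-- **Corollary 3.5 (complement property).**  Let `S` be a real linear space of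
real-valued functions on `D` and `Φ` a set of linear functionals with `T_Φ` injective on
`S`.  Then `S` is phase retrieval iff `Φ` has the complement property: for every
`Φ' ⊆ Φ`, either functions of `S` vanishing on `Φ'` are zero, or functions of `S`
vanishing on `Φ \ Φ'` are zero. -/
theorem stmt_15 {D : Type*} [Nonempty D]
    (S : Submodule ℝ (D → ℝ)) (Φ : Set ((D → ℝ) →ₗ[ℝ] ℝ))
    (hinj : ∀ f ∈ S, ∀ g ∈ S, (∀ φ ∈ Φ, φ f = φ g) → f = g) :
    (∀ f ∈ S, {g : D → ℝ | g ∈ S ∧ ∀ φ ∈ Φ, |φ g| = |φ f|} = {f, -f}) ↔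
      ∀ Φ' ⊆ Φ,
        (∀ f ∈ S, (∀ φ ∈ Φ', φ f = 0) → f = 0) ∨
        (∀ f ∈ S, (∀ φ ∈ Φ \ Φ', φ f = 0) → f = 0) := by
  constructor
  · intro hpr Φ' hΦ'
    by_contra hcon
    push_neg at hcon
    obtain ⟨⟨f, hfS, hf0, hfne⟩, ⟨g, hgS, hg0, hgne⟩⟩ := hcon
    have key := hpr (f + g) (S.add_mem hfS hgS)
    have hmem : (f - g) ∈ {h : D → ℝ | h ∈ S ∧ ∀ φ ∈ Φ, |φ h| = |φ (f + g)|} := by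
      refine ⟨S.sub_mem hfS hgS, ?_⟩
      intro φ hφ
      by_cases h : φ ∈ Φ'
      · simp [map_sub, map_add, hf0 φ h]
      · have hg' : φ g = 0 := hg0 φ ⟨hφ, h⟩
        simp [map_sub, map_add, hg']
    rw [key] at hmem
    simp only [Set.mem_insert_iff, Set.mem_singleton_iff] at hmem
    rcases hmem with h | h
    · apply hgne
      funext x
      have hx := congrFun h x
      simp only [Pi.sub_apply, Pi.add_apply] at hx
      simp only [Pi.zero_apply]
      linarith
    · apply hfne
      funext x
      have hx := congrFun h x
      simp only [Pi.sub_apply, Pi.neg_apply, Pi.add_apply] at hx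
      simp only [Pi.zero_apply]
      linarith
  · intro hcp f hfS
    ext g
    simp only [Set.mem_setOf_eq, Set.mem_insert_iff, Set.mem_singleton_iff]
    constructor
    · rintro ⟨hgS, hg⟩
      rcases hcp {φ ∈ Φ | φ g = φ f} (fun φ hφ => hφ.1) with h | h
      · left
        have h0 : g - f = 0 := h (g - f) (S.sub_mem hgS hfS)
          (fun φ hφ => by simp [map_sub, hφ.2])
        exact sub_eq_zero.mp h0
      · right
        have h0 : g + f = 0 := by
          apply h (g + f) (S.add_mem hgS hfS)
          intro φ hφ
          obtain ⟨hφΦ, hφn⟩ := hφ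
          have hne : φ g ≠ φ f := fun he => hφn ⟨hφΦ, he⟩
          rcases abs_eq_abs.mp (hg φ hφΦ) with he | he
          · exact absurd he hne
          · simp [map_add, he]
        exact eq_neg_of_add_eq_zero_left h0
        
    · rintro (rfl | rfl)
      · exact ⟨hfS, fun φ _ => rfl⟩
      · exact ⟨S.neg_mem hfS, fun φ _ => by simp⟩
end

section
/- Let 𝒮 be a real linear space of H-valued functions on D, Φ a family of linear measurements on 𝒮, N ≥ 2, and B = {b_{φ,i} : φ ∈ Φ, 1 ≤ i ≤ N} a family of reference vectors in H. (a) If the linear map T : 𝒮 → ℝ^{Φ×{1,…,N}²}, v ↦ (⟨φ(v), b_{φ,i} − b_{φ,j}⟩)_{φ∈Φ, 1≤i,j≤N}, is injective, then 𝒮 is affine phase retrieval. (b) If moreover there exist f₀ ∈ 𝒮 and an index 1 ≤ i₀ ≤ N such that b_{φ,i₀} = φ(f₀) for all φ ∈ Φ, then the injectivity of T is also necessary for 𝒮 to be affine phase retrieval. -/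
open scoped RealInnerProductSpace

/-- **Theorem 4.1/4.2 (affine phase retrieval of vector-valued functions).**
Let `S` be a real linear space of `H`-valued functions on `D`, `Φ` a family of linear
measurements, `N ≥ 2`, and `b φ i` (`φ ∈ Φ`, `i : Fin N`) reference vectors in `H`.
(a) If the linear map `T : v ↦ (⟪φ v, b φ i - b φ j⟫)_{φ ∈ Φ, i, j}` is injective on
`S`, then `S` is affine phase retrieval.
(b) If moreover one group of reference vectors is the measurement of some `f₀ ∈ S`
(`b φ i₀ = φ f₀` for all `φ ∈ Φ`), then injectivity of `T` is also necessary. -/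
theorem stmt_19 {D H : Type*} [Nonempty D] [NormedAddCommGroup H]
    [InnerProductSpace ℝ H] [CompleteSpace H] [TopologicalSpace.SeparableSpace H]
    (S : Submodule ℝ (D → H)) (Φ : Set ((D → H) →ₗ[ℝ] H))
    (N : ℕ) (hN : 2 ≤ N) (b : ((D → H) →ₗ[ℝ] H) → Fin N → H) :
    ((∀ u ∈ S, ∀ v ∈ S,
        (∀ φ ∈ Φ, ∀ i j : Fin N, ⟪φ u, b φ i - b φ j⟫ = ⟪φ v, b φ i - b φ j⟫) →
        u = v) →
      ∀ f ∈ S, ∀ g ∈ S,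
        (∀ φ ∈ Φ, ∀ i : Fin N, ‖φ g + b φ i‖ = ‖φ f + b φ i‖) → g = f) ∧
    ((∃ f₀ ∈ S, ∃ i₀ : Fin N, ∀ φ ∈ Φ, b φ i₀ = φ f₀) →
      (∀ f ∈ S, ∀ g ∈ S,
        (∀ φ ∈ Φ, ∀ i : Fin N, ‖φ g + b φ i‖ = ‖φ f + b φ i‖) → g = f) →
      ∀ u ∈ S, ∀ v ∈ S,
        (∀ φ ∈ Φ, ∀ i j : Fin N, ⟪φ u, b φ i - b φ j⟫ = ⟪φ v, b φ i - b φ j⟫) →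
        u = v) := by
  constructor
  · intro hinj f hf g hg hfg
    refine hinj g hg f hf ?_
    intro φ hφ i j
    have key : ∀ i : Fin N, ‖φ g‖^2 + 2*⟪φ g, b φ i⟫ = ‖φ f‖^2 + 2*⟪φ f, b φ i⟫ := by
      intro i
      have h2 : ‖φ g + b φ i‖^2 = ‖φ f + b φ i‖^2 := by rw [hfg φ hφ i]
      rw [norm_add_sq_real, norm_add_sq_real] at h2
      linarith
    have hi := key i; have hj := key j
    rw [inner_sub_right, inner_sub_right]
    linarith
  · rintro ⟨f₀, hf₀, i₀, hb⟩ hapr u hu v hv huv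
    set w := u - v with hw
    have hwS : w ∈ S := S.sub_mem hu hv
    have horth : ∀ φ ∈ Φ, ∀ i j : Fin N, ⟪φ w, b φ i - b φ j⟫ = 0 := by
      intro φ hφ i j
      have h := huv φ hφ i j
      rw [hw, map_sub, inner_sub_left, h]; ring
    have hfm : (-f₀ + w) ∈ S := S.add_mem (S.neg_mem hf₀) hwS
    have hgm : (-f₀ - w) ∈ S := S.sub_mem (S.neg_mem hf₀) hwS
    have heq := hapr (-f₀ + w) hfm (-f₀ - w) hgm ?_
    · have hw0 : w = 0 := by
        have : -f₀ - w = -f₀ + w := heq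
        have h2 : w + w = 0 := by
          have := congrArg (fun x => x - (-f₀ - w)) this
          simpa [sub_sub_cancel] using this.symm
        have := congrArg (fun x => (2:ℝ)⁻¹ • x) h2
        simpa [smul_add, smul_smul, two_smul, smul_zero] using
          (by
            have : (2:ℝ) • w = 0 := by rw [two_smul]; exact h2
            have := congrArg (fun x => (2:ℝ)⁻¹ • x) this
            simpa [smul_smul] using this)
      rw [hw] at hw0
      exact sub_eq_zero.mp hw0
    · intro φ hφ i
      have h1 : φ (-f₀ - w) + b φ i = -(φ w) + (b φ i - b φ i₀) := by
        rw [map_sub, map_neg, hb φ hφ]; abel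
      have h2 : φ (-f₀ + w) + b φ i = φ w + (b φ i - b φ i₀) := by
        rw [map_add, map_neg, hb φ hφ]; abel
      rw [h1, h2]
      have ho := horth φ hφ i i₀
      have hsq : ‖-(φ w) + (b φ i - b φ i₀)‖^2 = ‖φ w + (b φ i - b φ i₀)‖^2 := by
        rw [norm_add_sq_real, norm_add_sq_real, norm_neg, inner_neg_left, ho]
        ring
      nlinarith [norm_nonneg (-(φ w) + (b φ i - b φ i₀)),
        norm_nonneg (φ w + (b φ i - b φ i₀))]
end
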